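/- arXiv:2110.04832 — 6 statements merged into one kernel-verified Lean document; each statement's English description precedes it below -/
import Mathlib

section
/- Let μ > 0, ε > 0 and a > 0. Then there exists a constant C > 0, depending only on μ, ε and a, such that for every measurable function f₀ : (a,∞) → [0,∞] one has ∫_a^∞ s^{−1−ε} ( ∫_s^∞ (r² − s²)^{μ−1} f₀(r) r dr ) ds ≤ C ∫_a^∞ f₀(r) r^{2μ−1} dr, as an inequality of extended nonnegative reals. -/
open MeasureTheory Set
open scoped ENNReal

private lemma lint_rpow_Ioi (a p : ℝ) (ha : 0 < a) (hp : p < -1) :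
    ∫⁻ s in Ioi a, ENNReal.ofReal (s ^ p) = ENNReal.ofReal (-a ^ (p + 1) / (p + 1)) := by
  rw [← integral_Ioi_rpow_of_lt hp ha]
  rw [MeasureTheory.ofReal_integral_eq_lintegral_ofReal (integrableOn_Ioi_rpow_of_lt hp ha)]
  filter_upwards [ae_restrict_mem measurableSet_Ioi] with s hs
  exact Real.rpow_nonneg (le_of_lt (ha.trans hs)) p

private lemma lint_rpow_Ioc (c q : ℝ) (hc : 0 ≤ c) (hq : -1 < q) :
    ∫⁻ y in Ioc 0 c, ENNReal.ofReal (y ^ q) = ENNReal.ofReal (c ^ (q + 1) / (q + 1)) := by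
  have hint : IntegrableOn (fun y : ℝ => y ^ q) (Ioc 0 c) :=
    (intervalIntegral.intervalIntegrable_rpow' (a := 0) (b := c) hq).1
  rw [← MeasureTheory.ofReal_integral_eq_lintegral_ofReal hint ?_]
  · congr 1
    have h0 : (0 : ℝ) ^ (q + 1) = 0 := Real.zero_rpow (by linarith)
    have h := integral_rpow (a := 0) (b := c) (Or.inl hq)
    rw [intervalIntegral.integral_of_le hc] at h
    rw [h, h0, sub_zero]
  · filter_upwards [ae_restrict_mem measurableSet_Ioc] with y hy
    exact Real.rpow_nonneg hy.1.le q

private lemma lint_sub_rpow (r c q : ℝ) :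
    ∫⁻ s in Ico c r, ENNReal.ofReal ((r - s) ^ q)
      = ∫⁻ y in Ioc (r - r) (r - c), ENNReal.ofReal (y ^ q) := by
  have h := (Measure.measurePreserving_sub_left (volume : Measure ℝ) r).setLIntegral_comp_emb
    (MeasurableEquiv.subLeft r).measurableEmbedding
    (fun y => ENNReal.ofReal (y ^ q)) (Ico c r)
  have himg : (fun x : ℝ => r - x) '' Ico c r = Ioc (r - r) (r - c) := by
    rw [image_const_sub_Ico]
  simpa [MeasurableEquiv.subLeft, himg] using h

private lemma radon_inner_bound (μ ε a : ℝ) (hμ : 0 < μ) (hε : 0 < ε) (ha : 0 < a)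
    {r : ℝ} (hr : a < r) :
    ∫⁻ s in Ioo a r, ENNReal.ofReal (s ^ (-1 - ε) * ((r ^ 2 - s ^ 2) ^ (μ - 1) * r))
      ≤ ENNReal.ofReal ((max 1 ((3 / 4 : ℝ) ^ (μ - 1)) * (a ^ (-ε) / ε)
          + max 1 ((2 : ℝ) ^ (μ - 1)) * (2 : ℝ) ^ (1 + ε - μ) / μ * a ^ (-ε)) * r ^ (2 * μ - 1)) := by
  have hr0 : 0 < r := ha.trans hr
  have hr20 : 0 < r / 2 := by linarith
  set M1 : ℝ := max 1 ((3 / 4 : ℝ) ^ (μ - 1)) with hM1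
  set M2 : ℝ := max 1 ((2 : ℝ) ^ (μ - 1)) with hM2
  have hM1pos : 0 < M1 := lt_of_lt_of_le one_pos (le_max_left _ _)
  have hM2pos : 0 < M2 := lt_of_lt_of_le one_pos (le_max_left _ _)
  have hane : 0 < a ^ (-ε) := Real.rpow_pos_of_pos ha _
  have hrsq : ((r : ℝ) ^ 2) ^ (μ - 1) = r ^ (2 * μ - 2) := by
    rw [← Real.rpow_natCast r 2, ← Real.rpow_mul hr0.le]
    norm_num
    rw [show (2 : ℝ) * (μ - 1) = 2 * μ - 2 by ring]
  have hr21 : r ^ (2 * μ - 2) * r = r ^ (2 * μ - 1) := by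
    nth_rewrite 2 [← Real.rpow_one r]
    rw [← Real.rpow_add hr0]; ring_nf
  have hrb : 0 ≤ r ^ (2 * μ - 2) := Real.rpow_nonneg hr0.le _
  -- Piece 1
  have h1 : ∫⁻ s in Ioo a (r / 2),
      ENNReal.ofReal (s ^ (-1 - ε) * ((r ^ 2 - s ^ 2) ^ (μ - 1) * r))
      ≤ ENNReal.ofReal (M1 * (a ^ (-ε) / ε) * r ^ (2 * μ - 1)) := by
    have key : ∀ s ∈ Ioo a (r / 2), (r ^ 2 - s ^ 2) ^ (μ - 1) ≤ M1 * r ^ (2 * μ - 2) := by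
      intro s hs
      have hs0 : 0 < s := ha.trans hs.1
      have hssq : s ^ 2 < (r / 2) ^ 2 := by
        apply pow_lt_pow_left₀ hs.2 hs0.le; norm_num
      have h34 : 3 / 4 * r ^ 2 ≤ r ^ 2 - s ^ 2 := by nlinarith
      have hle : r ^ 2 - s ^ 2 ≤ r ^ 2 := by nlinarith
      rcases le_or_gt μ 1 with hμ1 | hμ1
      · calc (r ^ 2 - s ^ 2) ^ (μ - 1) ≤ (3 / 4 * r ^ 2) ^ (μ - 1) :=
            Real.rpow_le_rpow_of_nonpos (by positivity) h34 (by linarith)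
          _ = (3 / 4 : ℝ) ^ (μ - 1) * (r ^ 2) ^ (μ - 1) :=
            Real.mul_rpow (by norm_num) (by positivity)
          _ ≤ M1 * r ^ (2 * μ - 2) := by
            rw [hrsq]
            exact mul_le_mul_of_nonneg_right (le_max_right _ _) hrb
      · calc (r ^ 2 - s ^ 2) ^ (μ - 1) ≤ (r ^ 2) ^ (μ - 1) :=
            Real.rpow_le_rpow (by nlinarith) hle (by linarith)
          _ = r ^ (2 * μ - 2) := hrsq
          _ ≤ M1 * r ^ (2 * μ - 2) := by
            nth_rewrite 1 [← one_mul (r ^ (2 * μ - 2))]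
            exact mul_le_mul_of_nonneg_right (le_max_left _ _) hrb
    calc ∫⁻ s in Ioo a (r / 2),
          ENNReal.ofReal (s ^ (-1 - ε) * ((r ^ 2 - s ^ 2) ^ (μ - 1) * r))
        ≤ ∫⁻ s in Ioo a (r / 2),
            ENNReal.ofReal (s ^ (-1 - ε)) * ENNReal.ofReal (M1 * r ^ (2 * μ - 1)) := by
          apply setLIntegral_mono (by fun_prop)
          intro s hs
          rw [← ENNReal.ofReal_mul (Real.rpow_nonneg (ha.trans hs.1).le _)]
          apply ENNReal.ofReal_le_ofReal
          apply mul_le_mul_of_nonneg_left _ (Real.rpow_nonneg (ha.trans hs.1).le _)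
          calc (r ^ 2 - s ^ 2) ^ (μ - 1) * r ≤ (M1 * r ^ (2 * μ - 2)) * r :=
              mul_le_mul_of_nonneg_right (key s hs) hr0.le
            _ = M1 * r ^ (2 * μ - 1) := by rw [mul_assoc, hr21]
      _ = (∫⁻ s in Ioo a (r / 2), ENNReal.ofReal (s ^ (-1 - ε)))
            * ENNReal.ofReal (M1 * r ^ (2 * μ - 1)) := lintegral_mul_const _ (by fun_prop)
      _ ≤ (∫⁻ s in Ioi a, ENNReal.ofReal (s ^ (-1 - ε)))
            * ENNReal.ofReal (M1 * r ^ (2 * μ - 1)) := by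
          gcongr
          exact fun s hs => hs.1
      _ = ENNReal.ofReal (M1 * (a ^ (-ε) / ε) * r ^ (2 * μ - 1)) := by
          rw [lint_rpow_Ioi a _ ha (by linarith), show (-1 - ε + 1) = -ε by ring,
            neg_div_neg_eq, ← ENNReal.ofReal_mul (by positivity)]
          congr 1
          ring
  -- Piece 2
  have h2 : ∫⁻ s in Ico (r / 2) r,
      ENNReal.ofReal (s ^ (-1 - ε) * ((r ^ 2 - s ^ 2) ^ (μ - 1) * r))
      ≤ ENNReal.ofReal (M2 * (2 : ℝ) ^ (1 + ε - μ) / μ * a ^ (-ε) * r ^ (2 * μ - 1)) := by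
    set c : ℝ := (r / 2) ^ (-1 - ε) * (M2 * r ^ μ) with hc
    have hc0 : 0 ≤ c := by positivity
    have key : ∀ s ∈ Ico (r / 2) r,
        s ^ (-1 - ε) * ((r ^ 2 - s ^ 2) ^ (μ - 1) * r) ≤ c * (r - s) ^ (μ - 1) := by
      intro s hs
      have hs0 : 0 < s := hr20.trans_le hs.1
      have hsr : s < r := hs.2
      have h1' : s ^ (-1 - ε) ≤ (r / 2) ^ (-1 - ε) :=
        Real.rpow_le_rpow_of_nonpos hr20 hs.1 (by linarith)
      have hfac : r ^ 2 - s ^ 2 = (r + s) * (r - s) := by ring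
      have h2' : (r + s) ^ (μ - 1) ≤ M2 * r ^ (μ - 1) := by
        rcases le_or_gt μ 1 with hμ1 | hμ1
        · calc (r + s) ^ (μ - 1) ≤ r ^ (μ - 1) :=
              Real.rpow_le_rpow_of_nonpos hr0 (by linarith) (by linarith)
            _ ≤ M2 * r ^ (μ - 1) := by
              nth_rewrite 1 [← one_mul (r ^ (μ - 1))]
              exact mul_le_mul_of_nonneg_right (le_max_left _ _) (Real.rpow_nonneg hr0.le _)
        · calc (r + s) ^ (μ - 1) ≤ (2 * r) ^ (μ - 1) :=
              Real.rpow_le_rpow (by linarith) (by linarith) (by linarith)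
            _ = (2 : ℝ) ^ (μ - 1) * r ^ (μ - 1) := Real.mul_rpow (by norm_num) hr0.le
            _ ≤ M2 * r ^ (μ - 1) :=
              mul_le_mul_of_nonneg_right (le_max_right _ _) (Real.rpow_nonneg hr0.le _)
      have h3' : (r ^ 2 - s ^ 2) ^ (μ - 1) ≤ M2 * r ^ (μ - 1) * (r - s) ^ (μ - 1) := by
        rw [hfac, Real.mul_rpow (by linarith) (by linarith)]
        exact mul_le_mul_of_nonneg_right h2' (Real.rpow_nonneg (by linarith) _)
      have hrmu : r ^ (μ - 1) * r = r ^ μ := by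
        nth_rewrite 2 [← Real.rpow_one r]
        rw [← Real.rpow_add hr0]; ring_nf
      calc s ^ (-1 - ε) * ((r ^ 2 - s ^ 2) ^ (μ - 1) * r)
          ≤ (r / 2) ^ (-1 - ε) * ((M2 * r ^ (μ - 1) * (r - s) ^ (μ - 1)) * r) := by
            apply mul_le_mul h1' _ (mul_nonneg (Real.rpow_nonneg (by nlinarith) _) hr0.le)
              (by positivity)
            exact mul_le_mul_of_nonneg_right h3' hr0.le
        _ = c * (r - s) ^ (μ - 1) := by rw [hc, ← hrmu]; ring
    calc ∫⁻ s in Ico (r / 2) r,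
          ENNReal.ofReal (s ^ (-1 - ε) * ((r ^ 2 - s ^ 2) ^ (μ - 1) * r))
        ≤ ∫⁻ s in Ico (r / 2) r, ENNReal.ofReal c * ENNReal.ofReal ((r - s) ^ (μ - 1)) := by
          apply setLIntegral_mono (by fun_prop)
          intro s hs
          rw [← ENNReal.ofReal_mul hc0]
          exact ENNReal.ofReal_le_ofReal (key s hs)
      _ = ENNReal.ofReal c * ∫⁻ s in Ico (r / 2) r, ENNReal.ofReal ((r - s) ^ (μ - 1)) :=
          lintegral_const_mul _ (by fun_prop)
      _ = ENNReal.ofReal c * ENNReal.ofReal ((r / 2) ^ μ / μ) := by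
          rw [lint_sub_rpow r (r / 2) (μ - 1), sub_self, show r - r / 2 = r / 2 by ring,
            lint_rpow_Ioc _ _ (by linarith) (by linarith), show μ - 1 + 1 = μ by ring]
      _ ≤ ENNReal.ofReal (M2 * (2 : ℝ) ^ (1 + ε - μ) / μ * a ^ (-ε) * r ^ (2 * μ - 1)) := by
          rw [← ENNReal.ofReal_mul hc0]
          apply ENNReal.ofReal_le_ofReal
          have e1 : (r / 2) ^ (-1 - ε) * (r / 2) ^ μ = (r / 2) ^ (μ - 1 - ε) := by
            rw [← Real.rpow_add hr20]; ring_nf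
          have e2 : (r / 2) ^ (μ - 1 - ε) = r ^ (μ - 1 - ε) * (2 : ℝ) ^ (1 + ε - μ) := by
            rw [Real.div_rpow hr0.le (by norm_num), show (1 + ε - μ) = -(μ - 1 - ε) by ring,
              Real.rpow_neg (by norm_num), div_eq_mul_inv]
          have e3 : r ^ (μ - 1 - ε) * r ^ μ = r ^ (2 * μ - 1) * r ^ (-ε) := by
            rw [← Real.rpow_add hr0, ← Real.rpow_add hr0]; ring_nf
          have e4 : r ^ (-ε) ≤ a ^ (-ε) :=
            Real.rpow_le_rpow_of_nonpos ha hr.le (by linarith)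
          calc c * ((r / 2) ^ μ / μ)
              = ((r / 2) ^ (-1 - ε) * (r / 2) ^ μ) * (M2 * r ^ μ) / μ := by rw [hc]; ring
            _ = (r ^ (μ - 1 - ε) * (2 : ℝ) ^ (1 + ε - μ)) * (M2 * r ^ μ) / μ := by
                rw [e1, e2]
            _ = (2 : ℝ) ^ (1 + ε - μ) * M2 / μ * (r ^ (μ - 1 - ε) * r ^ μ) := by ring
            _ = (2 : ℝ) ^ (1 + ε - μ) * M2 / μ * (r ^ (2 * μ - 1) * r ^ (-ε)) := by rw [e3]
            _ ≤ (2 : ℝ) ^ (1 + ε - μ) * M2 / μ * (r ^ (2 * μ - 1) * a ^ (-ε)) := by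
                apply mul_le_mul_of_nonneg_left _ (by positivity)
                exact mul_le_mul_of_nonneg_left e4 (Real.rpow_nonneg hr0.le _)
            _ = M2 * (2 : ℝ) ^ (1 + ε - μ) / μ * a ^ (-ε) * r ^ (2 * μ - 1) := by ring
  -- combine
  have hsubset : Ioo a r ⊆ Ioo a (r / 2) ∪ Ico (r / 2) r := by
    intro s hs
    rcases lt_or_ge s (r / 2) with h | h
    · exact Or.inl ⟨hs.1, h⟩
    · exact Or.inr ⟨h, hs.2⟩
  calc ∫⁻ s in Ioo a r, ENNReal.ofReal (s ^ (-1 - ε) * ((r ^ 2 - s ^ 2) ^ (μ - 1) * r))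
      ≤ ∫⁻ s in Ioo a (r / 2) ∪ Ico (r / 2) r,
          ENNReal.ofReal (s ^ (-1 - ε) * ((r ^ 2 - s ^ 2) ^ (μ - 1) * r)) :=
        lintegral_mono_set hsubset
    _ ≤ _ + _ := lintegral_union_le _ _ _
    _ ≤ ENNReal.ofReal (M1 * (a ^ (-ε) / ε) * r ^ (2 * μ - 1))
          + ENNReal.ofReal (M2 * (2 : ℝ) ^ (1 + ε - μ) / μ * a ^ (-ε) * r ^ (2 * μ - 1)) :=
        add_le_add h1 h2
    _ = ENNReal.ofReal ((M1 * (a ^ (-ε) / ε)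
          + M2 * (2 : ℝ) ^ (1 + ε - μ) / μ * a ^ (-ε)) * r ^ (2 * μ - 1)) := by
        rw [← ENNReal.ofReal_add (by positivity) (by positivity)]
        congr 1; ring


/-- Fubini–Tonelli estimate: for `μ, ε, a > 0` there is a constant `C > 0`,
depending only on `μ, ε, a`, such that for every measurable
`f₀ : (a,∞) → [0,∞]`,
`∫_a^∞ s^{-1-ε} (∫_s^∞ (r²−s²)^{μ−1} f₀(r) r dr) ds ≤ C ∫_a^∞ f₀(r) r^{2μ−1} dr`. -/
theorem radon_fubini_tonelli_estimate (μ ε a : ℝ) (hμ : 0 < μ) (hε : 0 < ε) (ha : 0 < a) :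
    ∃ C : ℝ, 0 < C ∧ ∀ f₀ : ℝ → ℝ≥0∞, Measurable f₀ →
      ∫⁻ s in Ioi a, ENNReal.ofReal (s ^ (-1 - ε)) *
          ∫⁻ r in Ioi s, ENNReal.ofReal ((r ^ 2 - s ^ 2) ^ (μ - 1) * r) * f₀ r
        ≤ ENNReal.ofReal C * ∫⁻ r in Ioi a, ENNReal.ofReal (r ^ (2 * μ - 1)) * f₀ r := by
  set M1 : ℝ := max 1 ((3 / 4 : ℝ) ^ (μ - 1)) with hM1
  set M2 : ℝ := max 1 ((2 : ℝ) ^ (μ - 1)) with hM2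
  have hM1pos : 0 < M1 := lt_of_lt_of_le one_pos (le_max_left _ _)
  have hM2pos : 0 < M2 := lt_of_lt_of_le one_pos (le_max_left _ _)
  have hane : 0 < a ^ (-ε) := Real.rpow_pos_of_pos ha _
  refine ⟨M1 * (a ^ (-ε) / ε) + M2 * (2 : ℝ) ^ (1 + ε - μ) / μ * a ^ (-ε), by positivity,
    fun f₀ hf₀ => ?_⟩
  set C : ℝ := M1 * (a ^ (-ε) / ε) + M2 * (2 : ℝ) ^ (1 + ε - μ) / μ * a ^ (-ε) with hC
  have hCpos : 0 < C := by positivity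
  set F : ℝ → ℝ → ℝ≥0∞ := fun s r =>
    ENNReal.ofReal (s ^ (-1 - ε)) * (ENNReal.ofReal ((r ^ 2 - s ^ 2) ^ (μ - 1) * r) * f₀ r)
    with hF
  have hFmeas : Measurable fun p : ℝ × ℝ => F p.1 p.2 := by
    apply Measurable.mul
    · fun_prop
    · apply Measurable.mul
      · fun_prop
      · exact hf₀.comp measurable_snd
  have step1 : ∫⁻ s in Ioi a, ENNReal.ofReal (s ^ (-1 - ε)) *
      ∫⁻ r in Ioi s, ENNReal.ofReal ((r ^ 2 - s ^ 2) ^ (μ - 1) * r) * f₀ r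
      = ∫⁻ s in Ioi a, ∫⁻ r in Ioi s, F s r := by
    apply lintegral_congr fun s => ?_
    exact (lintegral_const_mul _ (by fun_prop)).symm
  have swap : ∫⁻ s in Ioi a, ∫⁻ r in Ioi s, F s r
      = ∫⁻ r in Ioi a, ∫⁻ s in Ioo a r, F s r := by
    have hmeas : Measurable (Function.uncurry fun s r => (Ioi s).indicator (F s) r) := by
      have heq : (Function.uncurry fun s r => (Ioi s).indicator (F s) r)
          = {p : ℝ × ℝ | p.1 < p.2}.indicator (fun p => F p.1 p.2) := by
        funext p
        simp [Function.uncurry, indicator_apply, mem_Ioi]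
      rw [heq]
      exact hFmeas.indicator (measurableSet_lt measurable_fst measurable_snd)
    calc ∫⁻ s in Ioi a, ∫⁻ r in Ioi s, F s r
        = ∫⁻ s in Ioi a, ∫⁻ r in Ioi a, (Ioi s).indicator (F s) r := by
          refine setLIntegral_congr_fun measurableSet_Ioi (fun s hs => ?_)
          rw [lintegral_indicator measurableSet_Ioi _,
            Measure.restrict_restrict measurableSet_Ioi,
            inter_eq_self_of_subset_left (Ioi_subset_Ioi hs.le)]
      _ = ∫⁻ r in Ioi a, ∫⁻ s in Ioi a, (Ioi s).indicator (F s) r :=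
          lintegral_lintegral_swap hmeas.aemeasurable
      _ = ∫⁻ r in Ioi a, ∫⁻ s in Ioo a r, F s r := by
          refine setLIntegral_congr_fun measurableSet_Ioi (fun r hr => ?_)
          rw [show (fun s => (Ioi s).indicator (F s) r)
              = fun s => (Iio r).indicator (fun s' => F s' r) s from
            funext fun s => by simp [indicator_apply, mem_Ioi, mem_Iio]]
          rw [lintegral_indicator measurableSet_Iio _,
            Measure.restrict_restrict measurableSet_Iio, inter_comm, Ioi_inter_Iio]
  rw [step1, swap]
  have step3 : ∀ r ∈ Ioi a, ∫⁻ s in Ioo a r, F s r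
      ≤ ENNReal.ofReal C * (ENNReal.ofReal (r ^ (2 * μ - 1)) * f₀ r) := by
    intro r hr
    have hr' : a < r := hr
    have hEq : ∫⁻ s in Ioo a r, F s r
        = (∫⁻ s in Ioo a r,
            ENNReal.ofReal (s ^ (-1 - ε) * ((r ^ 2 - s ^ 2) ^ (μ - 1) * r))) * f₀ r := by
      rw [← lintegral_mul_const _ (by fun_prop)]
      refine setLIntegral_congr_fun measurableSet_Ioo (fun s hs => ?_)
      rw [hF, ENNReal.ofReal_mul (Real.rpow_nonneg (ha.trans hs.1).le _), mul_assoc]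
    rw [hEq]
    calc (∫⁻ s in Ioo a r,
          ENNReal.ofReal (s ^ (-1 - ε) * ((r ^ 2 - s ^ 2) ^ (μ - 1) * r))) * f₀ r
        ≤ ENNReal.ofReal (C * r ^ (2 * μ - 1)) * f₀ r := by
          gcongr
          exact radon_inner_bound μ ε a hμ hε ha hr'
      _ = ENNReal.ofReal C * (ENNReal.ofReal (r ^ (2 * μ - 1)) * f₀ r) := by
          rw [ENNReal.ofReal_mul hCpos.le, mul_assoc]
  calc ∫⁻ r in Ioi a, ∫⁻ s in Ioo a r, F s r
      ≤ ∫⁻ r in Ioi a, ENNReal.ofReal C * (ENNReal.ofReal (r ^ (2 * μ - 1)) * f₀ r) :=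
        setLIntegral_mono' measurableSet_Ioi step3
    _ = ENNReal.ofReal C * ∫⁻ r in Ioi a, ENNReal.ofReal (r ^ (2 * μ - 1)) * f₀ r :=
        lintegral_const_mul _ (by fun_prop)
end

section
/- Let 0 ≤ j < k ≤ n − 1 be integers with n ≥ 2, and let p be a real number with p ≥ (n−j)/(k−j). Define g(r) = (2+r)^{(j−n)/p} (log(2+r))^{−1} for r > 0. Then ∫_0^∞ g(r)^p r^{n−j−1} dr < ∞, while ∫_1^∞ g(r) r^{k−j−1} dr = ∞. -/
open MeasureTheory Set Filter
open scoped ENNReal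

private lemma bertrand_conv {p : ℝ} (hp : 1 < p) :
    IntegrableOn (fun r : ℝ => r⁻¹ * Real.log r ^ (-p)) (Ioi (Real.exp 1)) := by
  have he1 : (1:ℝ) < Real.exp 1 := by
    have := Real.exp_one_gt_d9; linarith
  apply integrableOn_Ioi_deriv_of_nonneg'
    (g := fun x => Real.log x ^ (1 - p) / (1 - p)) (l := 0)
  · intro x hx
    have hx1 : (1:ℝ) < x := lt_of_lt_of_le he1 hx
    have hx0 : (0:ℝ) < x := by linarith
    have hl : 0 < Real.log x := Real.log_pos hx1
    have h1 : HasDerivAt Real.log x⁻¹ x := Real.hasDerivAt_log hx0.ne'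
    have h2 : HasDerivAt (fun y : ℝ => y ^ (1 - p))
        ((1 - p) * Real.log x ^ (1 - p - 1)) (Real.log x) :=
      Real.hasDerivAt_rpow_const (Or.inl hl.ne')
    have h3 := (h2.comp x h1).div_const (1 - p)
    refine h3.congr_deriv ?_
    have hp0 : (1 : ℝ) - p ≠ 0 := by linarith
    rw [show (1 : ℝ) - p - 1 = -p by ring]
    field_simp
  · intro x hx
    have hx1 : (1:ℝ) < x := lt_of_lt_of_le he1 (le_of_lt hx)
    have hl : 0 < Real.log x := Real.log_pos hx1
    positivity
  · have h := (tendsto_rpow_neg_atTop (y := p - 1) (by linarith)).comp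
      Real.tendsto_log_atTop
    have h2 : Tendsto (fun x : ℝ => Real.log x ^ (1 - p)) atTop (nhds 0) := by
      convert h using 2 with x
      · rw [Function.comp_apply]; ring_nf
    simpa using h2.div_const (1 - p)

private lemma bertrand_div_int :
    ¬ IntegrableOn (fun r : ℝ => r⁻¹ * (Real.log r)⁻¹) (Ioi (Real.exp 1)) := by
  have he1 : (1:ℝ) < Real.exp 1 := by
    have := Real.exp_one_gt_d9; linarith
  apply not_integrableOn_of_tendsto_norm_atTop_of_deriv_isBigO_filter
    (f := fun x => Real.log (Real.log x)) atTop (Ioi_mem_atTop _)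
  · filter_upwards [eventually_gt_atTop (Real.exp 1)] with x hx
    have hx1 : (1:ℝ) < x := lt_trans he1 hx
    have hl : 0 < Real.log x := Real.log_pos hx1
    exact (Real.differentiableAt_log hl.ne').comp x (Real.differentiableAt_log (by linarith))
  · apply tendsto_abs_atTop_atTop.comp
    exact Real.tendsto_log_atTop.comp Real.tendsto_log_atTop
  · apply Filter.EventuallyEq.isBigO
    filter_upwards [eventually_gt_atTop (Real.exp 1)] with x hx
    have hx1 : (1:ℝ) < x := lt_trans he1 hx
    have hl : 0 < Real.log x := Real.log_pos hx1
    have h : HasDerivAt (fun y => Real.log (Real.log y)) ((Real.log x)⁻¹ * x⁻¹) x :=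
      (Real.hasDerivAt_log hl.ne').comp x (Real.hasDerivAt_log (by linarith))
    rw [h.deriv]; ring

private lemma bertrand_div :
    ∫⁻ r in Ioi (Real.exp 1), ENNReal.ofReal (r⁻¹ * (Real.log r)⁻¹) = ⊤ := by
  by_contra h
  apply bertrand_div_int
  have hmeas : Measurable (fun r : ℝ => r⁻¹ * (Real.log r)⁻¹) :=
    measurable_inv.mul Real.measurable_log.inv
  refine ⟨hmeas.aestronglyMeasurable, ?_⟩
  rw [hasFiniteIntegral_iff_ofReal]
  · exact lt_top_iff_ne_top.mpr h
  · refine (ae_restrict_iff' measurableSet_Ioi).mpr (ae_of_all _ fun x hx => ?_)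
    have hx1 : (1:ℝ) < x := lt_trans (by have := Real.exp_one_gt_d9; linarith) hx
    have := Real.log_pos hx1
    positivity

/-- Sharpness example for the `j`-plane to `k`-plane Radon transform on `L^p`:
for `0 ≤ j < k ≤ n−1`, `n ≥ 2`, and `p ≥ (n−j)/(k−j)`, the function
`g(r) = (2+r)^{(j−n)/p} (log(2+r))⁻¹` satisfies `∫_0^∞ g(r)^p r^{n−j−1} dr < ∞`
while `∫_1^∞ g(r) r^{k−j−1} dr = ∞`. -/
theorem lp_sharpness_example (n j k : ℕ) (hn : 2 ≤ n) (hjk : j < k) (hk : k ≤ n - 1)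
    (p : ℝ) (hp : ((n : ℝ) - j) / ((k : ℝ) - j) ≤ p)
    (g : ℝ → ℝ)
    (hg : ∀ r : ℝ, g r = (2 + r) ^ (((j : ℝ) - n) / p) * (Real.log (2 + r))⁻¹) :
    (∫⁻ r in Ioi (0 : ℝ), ENNReal.ofReal (g r ^ p * r ^ ((n : ℝ) - j - 1)) < ⊤) ∧
    (∫⁻ r in Ioi (1 : ℝ), ENNReal.ofReal (g r * r ^ ((k : ℝ) - j - 1)) = ⊤) := by
  have hkn : k + 1 ≤ n := by omega
  have hjkr : (j:ℝ) + 1 ≤ k := by exact_mod_cast hjk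
  have hknr : (k:ℝ) + 1 ≤ n := by exact_mod_cast hkn
  have hkj0 : (0:ℝ) < (k:ℝ) - j := by linarith
  have hp1 : 1 < p := by
    refine lt_of_lt_of_le ?_ hp
    rw [lt_div_iff₀ hkj0]; linarith
  have hp0 : 0 < p := by linarith
  have hap : (n:ℝ) - j ≤ ((k:ℝ) - j) * p := by
    have := (div_le_iff₀ hkj0).mp hp; linarith
  set e := Real.exp 1 with he
  have he1 : (1:ℝ) < e := by have := Real.exp_one_gt_d9; rw [he]; linarith
  have he27 : (2.7:ℝ) < e := by have := Real.exp_one_gt_d9; rw [he]; linarith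
  have he0 : (0:ℝ) < e := by linarith
  simp only [hg]
  constructor
  · -- convergence part
    set q : ℝ := ((j:ℝ) - n) / p with hq
    set d : ℝ := (n:ℝ) - j - 1 with hd
    have hd0 : (0:ℝ) ≤ d := by rw [hd]; linarith
    set F1 : ℝ → ℝ := fun r =>
      ((2 + r) ^ q * (Real.log (2 + r))⁻¹) ^ p * r ^ d with hF1
    have key : ∀ r : ℝ, 0 < r →
        F1 r = (2 + r) ^ ((j:ℝ) - n) * Real.log (2 + r) ^ (-p) * r ^ d := by
      intro r hr
      have h2r : (1:ℝ) < 2 + r := by linarith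
      have hlog : 0 < Real.log (2 + r) := Real.log_pos h2r
      rw [hF1]
      simp only
      rw [Real.mul_rpow (Real.rpow_nonneg (by linarith) _) (inv_nonneg.mpr hlog.le),
        ← Real.rpow_mul (by linarith : (0:ℝ) ≤ 2 + r), hq, div_mul_cancel₀ _ hp0.ne',
        Real.inv_rpow hlog.le, ← Real.rpow_neg hlog.le]
    have hF1nonneg : ∀ r : ℝ, 0 < r → 0 ≤ F1 r := by
      intro r hr
      rw [key r hr]
      have h2r : (1:ℝ) < 2 + r := by linarith
      have hlog : 0 < Real.log (2 + r) := Real.log_pos h2r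
      positivity
    have hcont : ContinuousOn F1 (Ioi 0) := by
      intro r hr
      apply ContinuousAt.continuousWithinAt
      have h2r : (0:ℝ) < 2 + r := by have := hr.out; linarith
      have hlog : 0 < Real.log (2 + r) := Real.log_pos (by have := hr.out; linarith)
      have c0 : ContinuousAt (fun r : ℝ => 2 + r) r := by fun_prop
      have c1 : ContinuousAt (fun r : ℝ => (2 + r) ^ q) r :=
        c0.rpow_const (Or.inl h2r.ne')
      have c2 : ContinuousAt (fun r : ℝ => (Real.log (2 + r))⁻¹) r :=
        ((Real.continuousAt_log h2r.ne').comp c0).inv₀ hlog.ne'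
      have c3 : ContinuousAt (fun r : ℝ => r ^ d) r :=
        Real.continuousAt_rpow_const r d (Or.inl hr.out.ne')
      exact ((c1.mul c2).rpow_const (Or.inr hp0.le)).mul c3
    have m1 : IntegrableOn F1 (Ioc 0 e) := by
      refine Integrable.mono'
        (g := fun _ => Real.log 2 ^ (-p) * e ^ d)
        (integrableOn_const measure_Ioc_lt_top.ne)
        ((hcont.mono Ioc_subset_Ioi_self).aestronglyMeasurable measurableSet_Ioc) ?_
      refine (ae_restrict_iff' measurableSet_Ioc).mpr (ae_of_all _ fun r hr => ?_)
      have hr0 : 0 < r := hr.1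
      have h2r : (1:ℝ) < 2 + r := by linarith
      have hlog : 0 < Real.log (2 + r) := Real.log_pos h2r
      rw [Real.norm_eq_abs, abs_of_nonneg (hF1nonneg r hr0), key r hr0]
      have h1 : (2 + r) ^ ((j:ℝ) - n) ≤ 1 :=
        Real.rpow_le_one_of_one_le_of_nonpos (by linarith) (by linarith)
      have h2 : Real.log (2 + r) ^ (-p) ≤ Real.log 2 ^ (-p) :=
        Real.rpow_le_rpow_of_nonpos (Real.log_pos one_lt_two)
          (Real.log_le_log (by norm_num) (by linarith)) (by linarith)
      have h3 : r ^ d ≤ e ^ d := Real.rpow_le_rpow hr0.le hr.2 hd0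
      have hB : (0:ℝ) ≤ Real.log (2 + r) ^ (-p) := Real.rpow_nonneg hlog.le _
      have hC : (0:ℝ) ≤ r ^ d := Real.rpow_nonneg hr0.le _
      calc (2 + r) ^ ((j:ℝ) - n) * Real.log (2 + r) ^ (-p) * r ^ d
          ≤ 1 * Real.log 2 ^ (-p) * e ^ d := by
            apply mul_le_mul (mul_le_mul h1 h2 hB zero_le_one) h3 hC
            have : (0:ℝ) ≤ Real.log 2 ^ (-p) := Real.rpow_nonneg (Real.log_nonneg one_le_two) _
            linarith
        _ = Real.log 2 ^ (-p) * e ^ d := by rw [one_mul]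
    have m2 : IntegrableOn F1 (Ioi e) := by
      refine Integrable.mono' (bertrand_conv hp1)
        ((hcont.mono fun x hx => lt_trans he0 hx).aestronglyMeasurable measurableSet_Ioi) ?_
      refine (ae_restrict_iff' measurableSet_Ioi).mpr (ae_of_all _ fun r hr => ?_)
      have hre : e < r := hr
      have hr1 : (1:ℝ) < r := lt_trans he1 hre
      have hr0 : (0:ℝ) < r := by linarith
      have h2r : (1:ℝ) < 2 + r := by linarith
      have hlogr : 0 < Real.log r := Real.log_pos hr1
      have hlog : 0 < Real.log (2 + r) := Real.log_pos h2r
      rw [Real.norm_eq_abs, abs_of_nonneg (hF1nonneg r hr0), key r hr0]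
      have h1 : (2 + r) ^ ((j:ℝ) - n) ≤ r ^ ((j:ℝ) - n) :=
        Real.rpow_le_rpow_of_nonpos hr0 (by linarith) (by linarith)
      have h2 : Real.log (2 + r) ^ (-p) ≤ Real.log r ^ (-p) :=
        Real.rpow_le_rpow_of_nonpos hlogr (Real.log_le_log hr0 (by linarith)) (by linarith)
      have hB : (0:ℝ) ≤ Real.log (2 + r) ^ (-p) := Real.rpow_nonneg hlog.le _
      have hC : (0:ℝ) ≤ r ^ d := Real.rpow_nonneg hr0.le _
      calc (2 + r) ^ ((j:ℝ) - n) * Real.log (2 + r) ^ (-p) * r ^ d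
          ≤ r ^ ((j:ℝ) - n) * Real.log r ^ (-p) * r ^ d := by
            apply mul_le_mul (mul_le_mul h1 h2 hB (Real.rpow_nonneg hr0.le _)) le_rfl hC
            exact mul_nonneg (Real.rpow_nonneg hr0.le _) (Real.rpow_nonneg hlogr.le _)
        _ = r⁻¹ * Real.log r ^ (-p) := by
            rw [show r ^ ((j:ℝ) - n) * Real.log r ^ (-p) * r ^ d
              = r ^ ((j:ℝ) - n) * r ^ d * Real.log r ^ (-p) by ring,
              ← Real.rpow_add hr0, hd,
              show (j:ℝ) - n + ((n:ℝ) - j - 1) = -1 by ring, Real.rpow_neg_one]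
    have hint : IntegrableOn F1 (Ioi 0) := by
      have h := m1.union m2
      rwa [Ioc_union_Ioi_eq_Ioi he0.le] at h
    exact hint.lintegral_lt_top
  · -- divergence part
    set b : ℝ := (k:ℝ) - j with hb
    have hb1 : (1:ℝ) ≤ b := by rw [hb]; linarith
    set c : ℝ := (3:ℝ) ^ (-b) * 3⁻¹ with hc
    have hc0 : 0 < c := by rw [hc]; positivity
    set ψ : ℝ → ℝ := fun r => r⁻¹ * (Real.log r)⁻¹ with hψ
    have hlow : ∀ r ∈ Ioi e,
        c * ψ r ≤ (2 + r) ^ (((j:ℝ) - n) / p) * (Real.log (2 + r))⁻¹ * r ^ (b - 1) := by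
      intro r hr
      have hre : e < r := hr
      have hr1 : (1:ℝ) < r := lt_trans he1 hre
      have hr0 : (0:ℝ) < r := by linarith
      have h2r : (1:ℝ) < 2 + r := by linarith
      have hlogr : 0 < Real.log r := Real.log_pos hr1
      have hlog : 0 < Real.log (2 + r) := Real.log_pos h2r
      -- exponent comparison
      have hqb : -b ≤ ((j:ℝ) - n) / p := by
        have h1 : ((n:ℝ) - j) / p ≤ b := by
          rw [div_le_iff₀ hp0]; linarith
        have h2 : ((j:ℝ) - n) / p = -(((n:ℝ) - j) / p) := by ring
        linarith
      have step1 : (2 + r) ^ (-b) ≤ (2 + r) ^ (((j:ℝ) - n) / p) :=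
        Real.rpow_le_rpow_of_exponent_le (by linarith) hqb
      have step2 : (3 * r) ^ (-b) ≤ (2 + r) ^ (-b) :=
        Real.rpow_le_rpow_of_nonpos (by linarith) (by linarith) (by linarith)
      have hA : (3:ℝ) ^ (-b) * r ^ (-b) ≤ (2 + r) ^ (((j:ℝ) - n) / p) := by
        rw [← Real.mul_rpow (by norm_num) hr0.le]
        exact le_trans step2 step1
      -- log comparison
      have h23 : 2 + r ≤ r ^ (3:ℕ) := by nlinarith [sq_nonneg r, he27.trans hre]
      have step4 : Real.log (2 + r) ≤ 3 * Real.log r := by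
        calc Real.log (2 + r) ≤ Real.log (r ^ (3:ℕ)) := Real.log_le_log (by linarith) h23
          _ = 3 * Real.log r := by rw [Real.log_pow]; norm_num
      have hBineq : (3 * Real.log r)⁻¹ ≤ (Real.log (2 + r))⁻¹ :=
        inv_anti₀ hlog step4
      -- algebra
      have hrr : r ^ (-b) * r ^ (b - 1) = r⁻¹ := by
        rw [← Real.rpow_add hr0, show -b + (b - 1) = -1 by ring, Real.rpow_neg_one]
      have heq : c * ψ r = (3:ℝ) ^ (-b) * r ^ (-b) * (3 * Real.log r)⁻¹ * r ^ (b - 1) := by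
        rw [show (3:ℝ) ^ (-b) * r ^ (-b) * (3 * Real.log r)⁻¹ * r ^ (b - 1)
          = (3:ℝ) ^ (-b) * 3⁻¹ * (r ^ (-b) * r ^ (b - 1) * (Real.log r)⁻¹) by
            rw [mul_inv]; ring, hrr, hc, hψ]
      rw [heq]
      have hnn1 : (0:ℝ) ≤ (3 * Real.log r)⁻¹ := by positivity
      have hnn2 : (0:ℝ) ≤ r ^ (b - 1) := Real.rpow_nonneg hr0.le _
      apply mul_le_mul (mul_le_mul hA hBineq hnn1 (Real.rpow_nonneg (by linarith) _)) le_rfl hnn2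
      exact mul_nonneg (Real.rpow_nonneg (by linarith) _) (inv_nonneg.mpr hlog.le)
    have hψmeas : Measurable (fun r : ℝ => ENNReal.ofReal (ψ r)) :=
      (measurable_inv.mul Real.measurable_log.inv).ennreal_ofReal
    have h2 : ∫⁻ r in Ioi e, ENNReal.ofReal (c * ψ r) = ⊤ := by
      simp_rw [ENNReal.ofReal_mul hc0.le]
      rw [lintegral_const_mul _ hψmeas, bertrand_div,
        ENNReal.mul_top (by simpa using (ENNReal.ofReal_pos.mpr hc0).ne')]
    have h1 : ∫⁻ r in Ioi e, ENNReal.ofReal (c * ψ r)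
        ≤ ∫⁻ r in Ioi e,
          ENNReal.ofReal ((2 + r) ^ (((j:ℝ) - n) / p) * (Real.log (2 + r))⁻¹ * r ^ ((k:ℝ) - j - 1)) :=
      setLIntegral_mono' measurableSet_Ioi fun x hx =>
        ENNReal.ofReal_le_ofReal (hlow x hx)
    rw [eq_top_iff]
    calc (⊤:ℝ≥0∞) = ∫⁻ r in Ioi e, ENNReal.ofReal (c * ψ r) := h2.symm
      _ ≤ ∫⁻ r in Ioi e,
          ENNReal.ofReal ((2 + r) ^ (((j:ℝ) - n) / p) * (Real.log (2 + r))⁻¹ * r ^ ((k:ℝ) - j - 1)) := h1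
      _ ≤ ∫⁻ r in Ioi 1,
          ENNReal.ofReal ((2 + r) ^ (((j:ℝ) - n) / p) * (Real.log (2 + r))⁻¹ * r ^ ((k:ℝ) - j - 1)) :=
        lintegral_mono_set (Ioi_subset_Ioi he1.le)
end

section
/- Let n ≥ 2 and 1 ≤ k ≤ n − 1 be integers, and let δ be a real number with δ < n − k. Let P : ℝⁿ → ℝⁿ be the orthogonal projection P(x₁,…,x_n) = (0,…,0,x_{k+1},…,x_n) onto the span of the last n − k coordinate vectors. Then ∫_{S^{n−1}} ‖Pθ‖^{−δ} dσ(θ) = (σ_{k−1} σ_{n−k−1} / 2) B(k/2, (n−k−δ)/2); in particular this integral is finite. -/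
open MeasureTheory Set Metric
open scoped ENNReal

/-- The Euler Beta function `B(x,y) = Γ(x)Γ(y)/Γ(x+y)`. -/
noncomputable def eulerBeta (x y : ℝ) : ℝ := Real.Gamma x * Real.Gamma y / Real.Gamma (x + y)

/-- `σ_{m−1} = 2 π^{m/2} / Γ(m/2)`, the surface area of the unit sphere in `ℝ^m`. -/
noncomputable def sphereArea (m : ℕ) : ℝ :=
  2 * Real.pi ^ ((m : ℝ) / 2) / Real.Gamma ((m : ℝ) / 2)

section Helpers

open Real

/-- The model radial-singular Gaussian-type integrand on `ι → ℝ`. -/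
noncomputable def Ffun {ι : Type*} [Fintype ι] (δ : ℝ) : (ι → ℝ) → ℝ≥0∞ := fun y =>
  ENNReal.ofReal ((∑ i, y i ^ 2) ^ (-δ / 2) * Real.exp (-(∑ i, y i ^ 2)))

lemma measurable_sumSq {ι : Type*} [Fintype ι] :
    Measurable fun y : ι → ℝ => ∑ i, y i ^ 2 :=
  Finset.measurable_sum _ fun i _ => (measurable_pi_apply i).pow_const 2

lemma measurable_Ffun {ι : Type*} [Fintype ι] (δ : ℝ) : Measurable (Ffun (ι := ι) δ) :=
  ((measurable_sumSq.pow measurable_const).mul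
    (Real.measurable_exp.comp measurable_sumSq.neg)).ennreal_ofReal

/-- Lower integral version of the `Γ`-integral `∫_0^∞ r^s e^{-r²} dr = Γ((s+1)/2)/2`. -/
lemma lintegral_rpow_exp {s : ℝ} (hs : -1 < s) :
    ∫⁻ r in Ioi (0 : ℝ), ENNReal.ofReal (r ^ s * Real.exp (-(r ^ (2 : ℝ)))) =
      ENNReal.ofReal ((1 / 2) * Real.Gamma ((s + 1) / 2)) := by
  rw [← ofReal_integral_eq_lintegral_ofReal]
  · rw [show (∫ r in Ioi (0:ℝ), r ^ s * Real.exp (-(r ^ (2:ℝ)))) =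
        ∫ r in Ioi (0:ℝ), r ^ s * Real.exp (-r ^ (2:ℝ)) by norm_num,
      integral_rpow_mul_exp_neg_rpow (by norm_num) hs]
  · have := integrableOn_rpow_mul_exp_neg_rpow hs (two_pos)
    exact this
  · filter_upwards [ae_restrict_mem measurableSet_Ioi] with x hx
    have : (0:ℝ) < x := hx
    positivity

/-- Polar decomposition of a Lebesgue integral with respect to a Haar measure. -/
lemma lintegral_polar {E : Type*} [NormedAddCommGroup E] [NormedSpace ℝ E] [MeasurableSpace E]
    [BorelSpace E] [FiniteDimensional ℝ E] [Nontrivial E]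
    (μ : Measure E) [μ.IsAddHaarMeasure] (h : E → ℝ≥0∞) :
    ∫⁻ x, h x ∂μ =
      ∫⁻ p : sphere (0 : E) 1 × Ioi (0 : ℝ), h ((p.2 : ℝ) • (p.1 : E))
        ∂(μ.toSphere.prod (Measure.volumeIoiPow (Module.finrank ℝ E - 1))) := by
  have mp := μ.measurePreserving_homeomorphUnitSphereProd
  have key := MeasurePreserving.lintegral_map_equiv
    (μ := μ.comap (Subtype.val : ({0}ᶜ : Set E) → E))
    (ν := μ.toSphere.prod (Measure.volumeIoiPow (Module.finrank ℝ E - 1)))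
    (fun p : sphere (0 : E) 1 × Ioi (0 : ℝ) => h ((p.2 : ℝ) • (p.1 : E)))
    (homeomorphUnitSphereProd E).toMeasurableEquiv mp
  rw [key]
  have : ∀ x : ({0}ᶜ : Set E),
      h ((((homeomorphUnitSphereProd E) x).2 : ℝ) • (((homeomorphUnitSphereProd E) x).1 : E))
        = h (x : E) := by
    intro x
    have hx : (x : E) ≠ 0 := x.2
    simp only [homeomorphUnitSphereProd_apply_fst_coe, homeomorphUnitSphereProd_apply_snd_coe]
    rw [smul_inv_smul₀ (norm_ne_zero_iff.2 hx)]
  calc ∫⁻ x, h x ∂μ = ∫⁻ x in ({0}ᶜ : Set E), h x ∂μ := by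
        rw [MeasureTheory.restrict_compl_singleton]
    _ = ∫⁻ x : ({0}ᶜ : Set E), h (x : E) ∂(μ.comap Subtype.val) :=
        (lintegral_subtype_comap (measurableSet_singleton 0).compl _).symm
    _ = _ := lintegral_congr fun x => (this x).symm

/-- The total mass of the surface measure of the unit sphere in Euclidean space. -/
lemma toSphere_univ (ι : Type*) [Fintype ι] [Nonempty ι] :
    (volume : Measure (EuclideanSpace ℝ ι)).toSphere univ
      = ENNReal.ofReal (sphereArea (Fintype.card ι)) := by
  have hm : 0 < (Fintype.card ι : ℝ) := by
    exact_mod_cast Fintype.card_pos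
  have hΓ : 0 < Real.Gamma ((Fintype.card ι : ℝ) / 2) :=
    Real.Gamma_pos_of_pos (by positivity)
  haveI : Nontrivial (EuclideanSpace ℝ ι) := by
    refine Module.nontrivial_of_finrank_pos (R := ℝ) ?_
    rw [finrank_euclideanSpace]
    exact Fintype.card_pos
  rw [Measure.toSphere_apply_univ, EuclideanSpace.volume_ball, finrank_euclideanSpace]
  simp only [ENNReal.ofReal_one, one_pow, one_mul]
  rw [← ENNReal.ofReal_natCast, ← ENNReal.ofReal_mul (by positivity)]
  congr 1
  have h2 : Real.sqrt π ^ Fintype.card ι = π ^ ((Fintype.card ι : ℝ) / 2) := by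
    rw [Real.sqrt_eq_rpow, ← Real.rpow_natCast (π ^ ((1:ℝ)/2)) _, ← Real.rpow_mul pi_pos.le]
    ring_nf
  have h3 : Real.Gamma ((Fintype.card ι : ℝ) / 2 + 1)
      = ((Fintype.card ι : ℝ) / 2) * Real.Gamma ((Fintype.card ι : ℝ) / 2) :=
    Real.Gamma_add_one (by positivity)
  rw [h2, h3, sphereArea]
  field_simp

/-- Evaluation of the radial part of the polar decomposition. -/
lemma lintegral_volumeIoiPow_rpow_exp (d : ℕ) (δ : ℝ) (hδ : δ < (d : ℝ) + 1) :
    ∫⁻ r : Ioi (0 : ℝ), ENNReal.ofReal ((r : ℝ) ^ (-δ) * Real.exp (-((r : ℝ) ^ (2 : ℝ))))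
        ∂(Measure.volumeIoiPow d)
      = ENNReal.ofReal ((1 / 2) * Real.Gamma (((d : ℝ) + 1 - δ) / 2)) := by
  rw [Measure.volumeIoiPow,
    lintegral_withDensity_eq_lintegral_mul_non_measurable _
      ((measurable_subtype_coe.pow_const d).ennreal_ofReal)
      (ae_of_all _ fun x => ENNReal.ofReal_lt_top)]
  simp only [Pi.mul_apply]
  rw [lintegral_subtype_comap measurableSet_Ioi
    (fun r : ℝ => ENNReal.ofReal (r ^ d) *
      ENNReal.ofReal (r ^ (-δ) * Real.exp (-(r ^ (2 : ℝ)))))]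
  rw [setLIntegral_congr_fun measurableSet_Ioi
    (g := fun r : ℝ => ENNReal.ofReal (r ^ ((d : ℝ) - δ) * Real.exp (-(r ^ (2 : ℝ)))))
    (fun r (hr : 0 < r) => by
      rw [← ENNReal.ofReal_mul (by positivity), ← Real.rpow_natCast r d, ← mul_assoc,
        ← Real.rpow_add hr, sub_eq_add_neg])]
  rw [lintegral_rpow_exp (by linarith)]
  congr 2
  ring

/-- The key radial computation: integral of `‖x‖^{-δ} e^{-‖x‖²}` over Euclidean space,
expressed in coordinates. -/
lemma euclid_lintegral (ι : Type*) [Fintype ι] [Nonempty ι] (δ : ℝ)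
    (hδ : δ < Fintype.card ι) :
    ∫⁻ y : ι → ℝ, Ffun δ y
      = ENNReal.ofReal (sphereArea (Fintype.card ι)) *
          ENNReal.ofReal ((1 / 2) * Real.Gamma (((Fintype.card ι : ℝ) - δ) / 2)) := by
  classical
  set m := Fintype.card ι with hm
  have hm1 : 1 ≤ m := Fintype.card_pos
  haveI : Nontrivial (EuclideanSpace ℝ ι) := by
    refine Module.nontrivial_of_finrank_pos (R := ℝ) ?_
    rw [finrank_euclideanSpace]
    exact Fintype.card_pos
  have step1 : ∫⁻ y : ι → ℝ, Ffun δ y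
      = ∫⁻ x : EuclideanSpace ℝ ι,
          ENNReal.ofReal (‖x‖ ^ (-δ) * Real.exp (-(‖x‖ ^ (2 : ℝ)))) := by
    rw [MeasurePreserving.lintegral_map_equiv (Ffun δ)
      (MeasurableEquiv.toLp 2 (ι → ℝ)).symm (EuclideanSpace.volume_preserving_symm_measurableEquiv_toLp ι)]
    refine lintegral_congr fun x => ?_
    have hx : ∀ i, (MeasurableEquiv.toLp 2 (ι → ℝ)).symm x i = x i := fun i => rfl
    have hsum : ∑ i, ((MeasurableEquiv.toLp 2 (ι → ℝ)).symm x) i ^ 2 = ‖x‖ ^ (2 : ℝ) := by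
      simp only [hx]
      rw [Real.rpow_two, EuclideanSpace.norm_eq, Real.sq_sqrt (by positivity)]
      refine Finset.sum_congr rfl fun i _ => ?_
      rw [Real.norm_eq_abs, sq_abs]
    rw [Ffun, hsum, ← Real.rpow_mul (norm_nonneg x),
      show (2:ℝ) * (-δ / 2) = -δ by ring]
  rw [step1, lintegral_polar volume]
  have hfin : Module.finrank ℝ (EuclideanSpace ℝ ι) = m := finrank_euclideanSpace
  rw [hfin]
  have hpt : ∀ p : sphere (0 : EuclideanSpace ℝ ι) 1 × Ioi (0 : ℝ),
      ENNReal.ofReal (‖(p.2 : ℝ) • (p.1 : EuclideanSpace ℝ ι)‖ ^ (-δ) *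
        Real.exp (-(‖(p.2 : ℝ) • (p.1 : EuclideanSpace ℝ ι)‖ ^ (2 : ℝ))))
        = (1 : ℝ≥0∞) * ENNReal.ofReal ((p.2 : ℝ) ^ (-δ) *
            Real.exp (-((p.2 : ℝ) ^ (2 : ℝ)))) := by
    rintro ⟨θ, r⟩
    have hr : (0 : ℝ) < r := r.2
    have hθ : ‖(θ : EuclideanSpace ℝ ι)‖ = 1 := mem_sphere_zero_iff_norm.1 θ.2
    have : ‖(r : ℝ) • (θ : EuclideanSpace ℝ ι)‖ = (r : ℝ) := by
      rw [norm_smul, hθ, Real.norm_eq_abs, abs_of_pos hr, mul_one]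
    rw [this, one_mul]
  rw [lintegral_congr hpt, lintegral_prod_mul (f := fun _ => (1 : ℝ≥0∞))
    (g := fun r : Ioi (0 : ℝ) => ENNReal.ofReal ((r : ℝ) ^ (-δ) * Real.exp (-((r : ℝ) ^ (2 : ℝ)))))
    aemeasurable_const
    (((measurable_subtype_coe.pow measurable_const).mul
      ((measurable_subtype_coe.pow measurable_const).neg.exp)).ennreal_ofReal).aemeasurable]
  rw [lintegral_one, toSphere_univ, lintegral_volumeIoiPow_rpow_exp (m - 1) δ
    (by push_cast [Nat.cast_sub hm1] at *; linarith)]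
  rw [show ((m - 1 : ℕ) : ℝ) + 1 = (m : ℝ) by push_cast [Nat.cast_sub hm1]; ring, ← hm]

end Helpers

/-- Let `1 ≤ k ≤ n−1`, `n ≥ 2`, and `δ < n−k`. If `P` is the orthogonal projection of `ℝⁿ`
onto the span of the last `n−k` coordinate vectors, then the integral of `‖Pθ‖^{−δ}` over the
unit sphere `S^{n−1}` (with surface measure of total mass `σ_{n−1} = 2π^{n/2}/Γ(n/2)`)
equals `(σ_{k−1} σ_{n−k−1} / 2) B(k/2, (n−k−δ)/2)`; in particular it is finite. -/
theorem sphere_integral_projection_power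
    (n k : ℕ) (hn : 2 ≤ n) (hk : 1 ≤ k) (hk' : k ≤ n - 1)
    (δ : ℝ) (hδ : δ < (n : ℝ) - k)
    (P : EuclideanSpace ℝ (Fin n) → EuclideanSpace ℝ (Fin n))
    (hP : ∀ (x : EuclideanSpace ℝ (Fin n)) (i : Fin n),
      P x i = if (i : ℕ) < k then 0 else x i) :
    ∫⁻ θ : sphere (0 : EuclideanSpace ℝ (Fin n)) 1,
        ENNReal.ofReal (‖P (θ : EuclideanSpace ℝ (Fin n))‖ ^ (-δ))
        ∂((volume : Measure (EuclideanSpace ℝ (Fin n))).toSphere)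
      = ENNReal.ofReal
          (sphereArea k * sphereArea (n - k) / 2 *
            eulerBeta ((k : ℝ) / 2) (((n : ℝ) - k - δ) / 2)) := by
  classical
  have hkn : k < n := by omega
  have hk0 : 0 < k := hk
  have hn1 : 1 ≤ n := by omega
  have hknR : (k : ℝ) < (n : ℝ) := by exact_mod_cast (by omega : k < n)
  have hδn : δ < (n : ℝ) := by
    have : (0:ℝ) ≤ (k:ℝ) := by positivity
    linarith
  haveI hne1 : Nonempty {i : Fin n // (i : ℕ) < k} := ⟨⟨⟨0, by omega⟩, by simpa using hk0⟩⟩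
  haveI hne2 : Nonempty {i : Fin n // ¬ (i : ℕ) < k} := ⟨⟨⟨k, hkn⟩, by simp⟩⟩
  have card1 : Fintype.card {i : Fin n // (i : ℕ) < k} = k :=
    (Fintype.card_congr
      ⟨fun i => (⟨i.1.1, i.2⟩ : Fin k), fun j => ⟨⟨j.1, j.2.trans hkn⟩, j.2⟩,
        fun i => rfl, fun j => rfl⟩).trans (Fintype.card_fin k)
  have card2 : Fintype.card {i : Fin n // ¬ (i : ℕ) < k} = n - k := by
    rw [Fintype.card_subtype_compl, card1, Fintype.card_fin]
  have hcnk : ((n - k : ℕ) : ℝ) = (n : ℝ) - k := by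
    push_cast [Nat.cast_sub hkn.le]; ring
  -- coordinates are measurable
  have hcoord : ∀ j : Fin n, Measurable fun x : EuclideanSpace ℝ (Fin n) => x j :=
    fun j => (measurable_pi_apply j).comp (MeasurableEquiv.toLp 2 (Fin n → ℝ)).symm.measurable
  -- the norm of the projection in coordinates
  have hnormP : ∀ x : EuclideanSpace ℝ (Fin n),
      ‖P x‖ = Real.sqrt (∑ j : {i : Fin n // ¬ (i : ℕ) < k}, x j.1 ^ 2) := by
    intro x
    rw [EuclideanSpace.norm_eq]
    congr 1
    rw [← Fintype.sum_subtype_add_sum_subtype (fun i : Fin n => (i : ℕ) < k)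
      (fun i => ‖P x i‖ ^ 2)]
    have h1 : ∑ j : {i : Fin n // (i : ℕ) < k}, ‖P x j.1‖ ^ 2 = 0 :=
      Finset.sum_eq_zero fun j _ => by rw [hP, if_pos j.2]; simp
    rw [h1, zero_add]
    exact Finset.sum_congr rfl fun j _ => by rw [hP, if_neg j.2, Real.norm_eq_abs, sq_abs]
  have mP : Measurable fun x : EuclideanSpace ℝ (Fin n) => ‖P x‖ := by
    simp only [hnormP]
    exact Real.continuous_sqrt.measurable.comp
      (Finset.measurable_sum _ fun j _ => (hcoord j.1).pow_const 2)
  haveI : Nontrivial (EuclideanSpace ℝ (Fin n)) := by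
    refine Module.nontrivial_of_finrank_pos (R := ℝ) ?_
    rw [finrank_euclideanSpace, Fintype.card_fin]; omega
  have hfin : Module.finrank ℝ (EuclideanSpace ℝ (Fin n)) = n := by
    rw [finrank_euclideanSpace, Fintype.card_fin]
  -- Step A : polar decomposition of the total Gaussian-type integral
  have hΓn : 0 < Real.Gamma (((n : ℝ) - δ) / 2) :=
    Real.Gamma_pos_of_pos (by linarith)
  set c : ℝ≥0∞ := ENNReal.ofReal ((1 / 2) * Real.Gamma (((n : ℝ) - δ) / 2)) with hcdef
  have stepA : ∫⁻ x : EuclideanSpace ℝ (Fin n),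
        ENNReal.ofReal (‖P x‖ ^ (-δ) * Real.exp (-(‖x‖ ^ (2 : ℝ))))
      = (∫⁻ θ : sphere (0 : EuclideanSpace ℝ (Fin n)) 1,
          ENNReal.ofReal (‖P (θ : EuclideanSpace ℝ (Fin n))‖ ^ (-δ))
          ∂((volume : Measure (EuclideanSpace ℝ (Fin n))).toSphere)) * c := by
    have hpt : ∀ p : sphere (0 : EuclideanSpace ℝ (Fin n)) 1 × Ioi (0 : ℝ),
        ENNReal.ofReal (‖P ((p.2 : ℝ) • (p.1 : EuclideanSpace ℝ (Fin n)))‖ ^ (-δ) *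
            Real.exp (-(‖(p.2 : ℝ) • (p.1 : EuclideanSpace ℝ (Fin n))‖ ^ (2 : ℝ))))
          = (fun θ : sphere (0 : EuclideanSpace ℝ (Fin n)) 1 =>
              ENNReal.ofReal (‖P (θ : EuclideanSpace ℝ (Fin n))‖ ^ (-δ))) p.1 *
            (fun r : Ioi (0 : ℝ) =>
              ENNReal.ofReal ((r : ℝ) ^ (-δ) * Real.exp (-((r : ℝ) ^ (2 : ℝ))))) p.2 := by
      rintro ⟨θ, r⟩
      have hr : (0 : ℝ) < r := r.2
      have hθ : ‖(θ : EuclideanSpace ℝ (Fin n))‖ = 1 := mem_sphere_zero_iff_norm.1 θ.2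
      have hPsmul : P ((r : ℝ) • (θ : EuclideanSpace ℝ (Fin n)))
          = (r : ℝ) • P (θ : EuclideanSpace ℝ (Fin n)) := by
        ext i
        by_cases hik : (i : ℕ) < k
        · simp [hP, hik]
        · simp [hP, hik]
      have h1 : ‖P ((r : ℝ) • (θ : EuclideanSpace ℝ (Fin n)))‖
          = (r : ℝ) * ‖P (θ : EuclideanSpace ℝ (Fin n))‖ := by
        rw [hPsmul, norm_smul, Real.norm_eq_abs, abs_of_pos hr]
      have h2 : ‖(r : ℝ) • (θ : EuclideanSpace ℝ (Fin n))‖ = (r : ℝ) := by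
        rw [norm_smul, hθ, Real.norm_eq_abs, abs_of_pos hr, mul_one]
      simp only
      rw [h1, h2, Real.mul_rpow hr.le (norm_nonneg _),
        ← ENNReal.ofReal_mul (Real.rpow_nonneg (norm_nonneg _) _)]
      congr 1
      ring
    calc ∫⁻ x : EuclideanSpace ℝ (Fin n),
          ENNReal.ofReal (‖P x‖ ^ (-δ) * Real.exp (-(‖x‖ ^ (2 : ℝ))))
        = ∫⁻ p : sphere (0 : EuclideanSpace ℝ (Fin n)) 1 × Ioi (0 : ℝ),
            (fun θ : sphere (0 : EuclideanSpace ℝ (Fin n)) 1 =>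
              ENNReal.ofReal (‖P (θ : EuclideanSpace ℝ (Fin n))‖ ^ (-δ))) p.1 *
            (fun r : Ioi (0 : ℝ) =>
              ENNReal.ofReal ((r : ℝ) ^ (-δ) * Real.exp (-((r : ℝ) ^ (2 : ℝ))))) p.2
            ∂(((volume : Measure (EuclideanSpace ℝ (Fin n))).toSphere).prod
                (Measure.volumeIoiPow (n - 1))) := by
          rw [lintegral_polar volume, hfin]
          exact lintegral_congr hpt
      _ = (∫⁻ θ : sphere (0 : EuclideanSpace ℝ (Fin n)) 1,
            ENNReal.ofReal (‖P (θ : EuclideanSpace ℝ (Fin n))‖ ^ (-δ))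
            ∂((volume : Measure (EuclideanSpace ℝ (Fin n))).toSphere)) *
          (∫⁻ r : Ioi (0 : ℝ),
            ENNReal.ofReal ((r : ℝ) ^ (-δ) * Real.exp (-((r : ℝ) ^ (2 : ℝ))))
            ∂(Measure.volumeIoiPow (n - 1))) :=
          lintegral_prod_mul
            (((mP.comp measurable_subtype_coe).pow measurable_const).ennreal_ofReal).aemeasurable
            (((measurable_subtype_coe.pow measurable_const).mul
              ((measurable_subtype_coe.pow measurable_const).neg.exp)).ennreal_ofReal).aemeasurable
      _ = (∫⁻ θ : sphere (0 : EuclideanSpace ℝ (Fin n)) 1,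
            ENNReal.ofReal (‖P (θ : EuclideanSpace ℝ (Fin n))‖ ^ (-δ))
            ∂((volume : Measure (EuclideanSpace ℝ (Fin n))).toSphere)) * c := by
          rw [lintegral_volumeIoiPow_rpow_exp (n - 1) δ
            (by push_cast [Nat.cast_sub hn1]; linarith),
            show ((n - 1 : ℕ) : ℝ) + 1 = (n : ℝ) by push_cast [Nat.cast_sub hn1]; ring]
  -- Step B : splitting coordinates
  have stepB : ∫⁻ x : EuclideanSpace ℝ (Fin n),
        ENNReal.ofReal (‖P x‖ ^ (-δ) * Real.exp (-(‖x‖ ^ (2 : ℝ))))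
      = (∫⁻ a : {i : Fin n // (i : ℕ) < k} → ℝ, Ffun 0 a) *
        (∫⁻ b : {i : Fin n // ¬ (i : ℕ) < k} → ℝ, Ffun δ b) := by
    have hx : ∀ (x : EuclideanSpace ℝ (Fin n)) (i : Fin n),
        (MeasurableEquiv.toLp 2 (Fin n → ℝ)).symm x i = x i := fun _ _ => rfl
    calc ∫⁻ x : EuclideanSpace ℝ (Fin n),
          ENNReal.ofReal (‖P x‖ ^ (-δ) * Real.exp (-(‖x‖ ^ (2 : ℝ))))
        = ∫⁻ y : Fin n → ℝ,
            (Ffun 0 fun j : {i : Fin n // (i : ℕ) < k} => y j.1) *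
            (Ffun δ fun j : {i : Fin n // ¬ (i : ℕ) < k} => y j.1) := by
          rw [MeasurePreserving.lintegral_map_equiv
            (fun y : Fin n → ℝ =>
              (Ffun 0 fun j : {i : Fin n // (i : ℕ) < k} => y j.1) *
              (Ffun δ fun j : {i : Fin n // ¬ (i : ℕ) < k} => y j.1))
            (MeasurableEquiv.toLp 2 (Fin n → ℝ)).symm
            (EuclideanSpace.volume_preserving_symm_measurableEquiv_toLp (Fin n))]
          refine lintegral_congr fun x => ?_
          simp only [Ffun, hx]
          have hSnp : (0:ℝ) ≤ ∑ j : {i : Fin n // ¬ (i : ℕ) < k}, x j.1 ^ 2 := by positivity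
          have hPx : ‖P x‖ ^ (-δ)
              = (∑ j : {i : Fin n // ¬ (i : ℕ) < k}, x j.1 ^ 2) ^ (-δ / 2) := by
            rw [hnormP, Real.sqrt_eq_rpow, ← Real.rpow_mul hSnp,
              show (1/2 : ℝ) * (-δ) = -δ / 2 by ring]
          have hxsum : ‖x‖ ^ (2 : ℝ)
              = (∑ j : {i : Fin n // (i : ℕ) < k}, x j.1 ^ 2) +
                (∑ j : {i : Fin n // ¬ (i : ℕ) < k}, x j.1 ^ 2) := by
            rw [Real.rpow_two, EuclideanSpace.norm_eq, Real.sq_sqrt (by positivity),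
              ← Fintype.sum_subtype_add_sum_subtype (fun i : Fin n => (i : ℕ) < k)
                (fun i => ‖x i‖ ^ 2)]
            congr 1
            · exact Finset.sum_congr rfl fun j _ => by rw [Real.norm_eq_abs, sq_abs]
            · exact Finset.sum_congr rfl fun j _ => by rw [Real.norm_eq_abs, sq_abs]
          rw [hPx, hxsum, ← ENNReal.ofReal_mul (by positivity)]
          congr 1
          rw [show -(0:ℝ) / 2 = (0:ℝ) by norm_num, Real.rpow_zero, one_mul, neg_add,
            Real.exp_add]
          ring
      _ = ∫⁻ z : ({i : Fin n // (i : ℕ) < k} → ℝ) × ({i : Fin n // ¬ (i : ℕ) < k} → ℝ),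
            Ffun 0 z.1 * Ffun δ z.2 := by
          rw [MeasurePreserving.lintegral_map_equiv
            (fun z : ({i : Fin n // (i : ℕ) < k} → ℝ) × ({i : Fin n // ¬ (i : ℕ) < k} → ℝ) =>
              Ffun 0 z.1 * Ffun δ z.2)
            (MeasurableEquiv.piEquivPiSubtypeProd (fun _ : Fin n => ℝ)
              (fun i : Fin n => (i : ℕ) < k))
            (volume_preserving_piEquivPiSubtypeProd (fun _ : Fin n => ℝ)
              (fun i : Fin n => (i : ℕ) < k))]
          exact lintegral_congr fun y => rfl
      _ = (∫⁻ a : {i : Fin n // (i : ℕ) < k} → ℝ, Ffun 0 a) *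
          (∫⁻ b : {i : Fin n // ¬ (i : ℕ) < k} → ℝ, Ffun δ b) := by
          rw [MeasureTheory.Measure.volume_eq_prod]
          exact lintegral_prod_mul (measurable_Ffun 0).aemeasurable
            (measurable_Ffun δ).aemeasurable
  -- evaluate the two factors
  have eB1 : ∫⁻ a : {i : Fin n // (i : ℕ) < k} → ℝ, Ffun 0 a
      = ENNReal.ofReal (sphereArea k) *
        ENNReal.ofReal ((1 / 2) * Real.Gamma ((k : ℝ) / 2)) := by
    rw [euclid_lintegral _ 0 (by rw [card1]; exact_mod_cast hk0), card1]
    norm_num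
  have eB2 : ∫⁻ b : {i : Fin n // ¬ (i : ℕ) < k} → ℝ, Ffun δ b
      = ENNReal.ofReal (sphereArea (n - k)) *
        ENNReal.ofReal ((1 / 2) * Real.Gamma (((n : ℝ) - k - δ) / 2)) := by
    rw [euclid_lintegral _ δ (by rw [card2, hcnk]; exact hδ), card2, hcnk]
  have key : (∫⁻ θ : sphere (0 : EuclideanSpace ℝ (Fin n)) 1,
        ENNReal.ofReal (‖P (θ : EuclideanSpace ℝ (Fin n))‖ ^ (-δ))
        ∂((volume : Measure (EuclideanSpace ℝ (Fin n))).toSphere)) * c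
      = (ENNReal.ofReal (sphereArea k) *
          ENNReal.ofReal ((1 / 2) * Real.Gamma ((k : ℝ) / 2))) *
        (ENNReal.ofReal (sphereArea (n - k)) *
          ENNReal.ofReal ((1 / 2) * Real.Gamma (((n : ℝ) - k - δ) / 2))) := by
    rw [← stepA, stepB, eB1, eB2]
  -- positivity facts
  have hΓk : 0 < Real.Gamma ((k : ℝ) / 2) := Real.Gamma_pos_of_pos (by positivity)
  have hΓnkδ : 0 < Real.Gamma (((n : ℝ) - k - δ) / 2) :=
    Real.Gamma_pos_of_pos (by linarith)
  have hσk : 0 ≤ sphereArea k := by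
    rw [sphereArea]
    exact div_nonneg (by positivity) hΓk.le
  have hσnk : 0 ≤ sphereArea (n - k) := by
    rw [sphereArea, hcnk]
    refine div_nonneg (by positivity) ?_
    exact (Real.Gamma_pos_of_pos (by linarith [hknR])).le
  have hB : 0 ≤ eulerBeta ((k : ℝ) / 2) (((n : ℝ) - k - δ) / 2) := by
    rw [eulerBeta, show (k : ℝ) / 2 + ((n : ℝ) - k - δ) / 2 = ((n : ℝ) - δ) / 2 by ring]
    exact div_nonneg (mul_nonneg hΓk.le hΓnkδ.le) hΓn.le
  have hreal : sphereArea k * sphereArea (n - k) / 2 *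
      eulerBeta ((k : ℝ) / 2) (((n : ℝ) - k - δ) / 2) *
      ((1 / 2) * Real.Gamma (((n : ℝ) - δ) / 2))
      = sphereArea k * ((1 / 2) * Real.Gamma ((k : ℝ) / 2)) *
        (sphereArea (n - k) * ((1 / 2) * Real.Gamma (((n : ℝ) - k - δ) / 2))) := by
    rw [eulerBeta, show (k : ℝ) / 2 + ((n : ℝ) - k - δ) / 2 = ((n : ℝ) - δ) / 2 by ring]
    field_simp
  have hRHSc : ENNReal.ofReal (sphereArea k * sphereArea (n - k) / 2 *
        eulerBeta ((k : ℝ) / 2) (((n : ℝ) - k - δ) / 2)) * c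
      = (ENNReal.ofReal (sphereArea k) *
          ENNReal.ofReal ((1 / 2) * Real.Gamma ((k : ℝ) / 2))) *
        (ENNReal.ofReal (sphereArea (n - k)) *
          ENNReal.ofReal ((1 / 2) * Real.Gamma (((n : ℝ) - k - δ) / 2))) := by
    rw [hcdef, ← ENNReal.ofReal_mul hσk, ← ENNReal.ofReal_mul hσnk,
      ← ENNReal.ofReal_mul (mul_nonneg hσk (by positivity)),
      ← ENNReal.ofReal_mul (by positivity), hreal]
  have hc0 : c ≠ 0 := by
    rw [hcdef]
    exact (ENNReal.ofReal_pos.mpr (by positivity)).ne'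
  have hcT : c ≠ ⊤ := by rw [hcdef]; exact ENNReal.ofReal_ne_top
  calc ∫⁻ θ : sphere (0 : EuclideanSpace ℝ (Fin n)) 1,
        ENNReal.ofReal (‖P (θ : EuclideanSpace ℝ (Fin n))‖ ^ (-δ))
        ∂((volume : Measure (EuclideanSpace ℝ (Fin n))).toSphere)
      = (∫⁻ θ : sphere (0 : EuclideanSpace ℝ (Fin n)) 1,
          ENNReal.ofReal (‖P (θ : EuclideanSpace ℝ (Fin n))‖ ^ (-δ))
          ∂((volume : Measure (EuclideanSpace ℝ (Fin n))).toSphere)) * c * c⁻¹ := by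
        rw [mul_assoc, ENNReal.mul_inv_cancel hc0 hcT, mul_one]
    _ = ENNReal.ofReal (sphereArea k * sphereArea (n - k) / 2 *
          eulerBeta ((k : ℝ) / 2) (((n : ℝ) - k - δ) / 2)) * c * c⁻¹ := by
        rw [key, ← hRHSc]
    _ = ENNReal.ofReal (sphereArea k * sphereArea (n - k) / 2 *
          eulerBeta ((k : ℝ) / 2) (((n : ℝ) - k - δ) / 2)) := by
        rw [mul_assoc, ENNReal.mul_inv_cancel hc0 hcT, mul_one]
end

section
/- Let β > 0, μ > 0 and 0 < s < a. Then ∫_s^a (a² − r²)^{β−1} (r² − s²)^{μ−1} r^{1−2β−2μ} dr = (1/2) B(β, μ) a^{−2μ} s^{−2β} (a² − s²)^{β+μ−1}. -/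
open MeasureTheory Set
open scoped ENNReal

lemma realBeta_intervalIntegral {β μ : ℝ} (hβ : 0 < β) (hμ : 0 < μ) :
    ∫ x in (0:ℝ)..1, x ^ (μ - 1) * (1 - x) ^ (β - 1) = eulerBeta β μ := by
  have hEq : EqOn (fun x : ℝ => ((x : ℂ)) ^ ((μ : ℂ) - 1) * ((1 : ℂ) - x) ^ ((β : ℂ) - 1))
      (fun x : ℝ => ((x ^ (μ - 1) * (1 - x) ^ (β - 1) : ℝ) : ℂ)) (uIcc 0 1) := by
    intro x hx
    rw [uIcc_of_le (by norm_num)] at hx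
    have hx0 : (0:ℝ) ≤ x := hx.1
    have hx1 : (0:ℝ) ≤ 1 - x := by linarith [hx.2]
    simp only [Complex.ofReal_mul, Complex.ofReal_cpow hx0, Complex.ofReal_cpow hx1]
    push_cast
    ring
  have h1 : Complex.betaIntegral μ β = ((∫ x in (0:ℝ)..1, x ^ (μ - 1) * (1 - x) ^ (β - 1) : ℝ) : ℂ) := by
    rw [Complex.betaIntegral, intervalIntegral.integral_congr hEq,
      intervalIntegral.integral_ofReal]
  have h2 := Complex.Gamma_mul_Gamma_eq_betaIntegral
      (s := (μ : ℂ)) (t := (β : ℂ)) (by simpa using hμ) (by simpa using hβ)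
  rw [h1] at h2
  have h3 : ((μ : ℂ) + β) = ((μ + β : ℝ) : ℂ) := by push_cast; ring
  rw [h3, Complex.Gamma_ofReal, Complex.Gamma_ofReal, Complex.Gamma_ofReal] at h2
  have h4 : (Real.Gamma μ * Real.Gamma β : ℝ) =
      Real.Gamma (μ + β) * ∫ x in (0:ℝ)..1, x ^ (μ - 1) * (1 - x) ^ (β - 1) := by
    exact_mod_cast h2
  have hG : Real.Gamma (μ + β) ≠ 0 := (Real.Gamma_pos_of_pos (by linarith)).ne'
  rw [eulerBeta, add_comm β μ]
  field_simp
  linarith [h4]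

lemma realBeta_integrable {β μ : ℝ} (hβ : 0 < β) (hμ : 0 < μ) :
    IntegrableOn (fun x : ℝ => x ^ (μ - 1) * (1 - x) ^ (β - 1)) (Ioo 0 1) := by
  have h := Complex.betaIntegral_convergent (u := (μ:ℂ)) (v := (β:ℂ))
      (by simpa using hμ) (by simpa using hβ)
  have h' : IntegrableOn (fun x : ℝ => ((x : ℂ)) ^ ((μ : ℂ) - 1) * ((1 : ℂ) - x) ^ ((β : ℂ) - 1))
      (Ioo 0 1) := (h.1.mono_set Ioo_subset_Ioc_self)
  refine IntegrableOn.congr_fun h'.re ?_ measurableSet_Ioo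
  intro x hx
  have hx0 : (0:ℝ) ≤ x := hx.1.le
  have hx1 : (0:ℝ) ≤ 1 - x := by linarith [hx.2.le]
  simp only [Function.comp]
  rw [show ((x : ℂ)) ^ ((μ : ℂ) - 1) * ((1 : ℂ) - x) ^ ((β : ℂ) - 1)
      = ((x ^ (μ - 1) * (1 - x) ^ (β - 1) : ℝ) : ℂ) by
    simp only [Complex.ofReal_mul, Complex.ofReal_cpow hx0, Complex.ofReal_cpow hx1]
    push_cast; ring]
  simp

lemma realBeta_lintegral {β μ : ℝ} (hβ : 0 < β) (hμ : 0 < μ) :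
    ∫⁻ x in Ioo (0:ℝ) 1, ENNReal.ofReal (x ^ (μ - 1) * (1 - x) ^ (β - 1))
      = ENNReal.ofReal (eulerBeta β μ) := by
  rw [← ofReal_integral_eq_lintegral_ofReal (realBeta_integrable hβ hμ) ?_]
  · rw [← realBeta_intervalIntegral hβ hμ,
      intervalIntegral.integral_of_le (by norm_num : (0:ℝ) ≤ 1),
      integral_Ioc_eq_integral_Ioo]
  · filter_upwards [ae_restrict_mem measurableSet_Ioo] with x hx
    have hx0 : (0:ℝ) ≤ x := hx.1.le
    have hx1 : (0:ℝ) ≤ 1 - x := by linarith [hx.2.le]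
    positivity

/-- For `β > 0`, `μ > 0`, `0 < s < a`:
`∫_s^a (a²−r²)^{β−1} (r²−s²)^{μ−1} r^{1−2β−2μ} dr
  = (1/2) B(β,μ) a^{−2μ} s^{−2β} (a²−s²)^{β+μ−1}`. -/
theorem integral_weighted_chord_kernel (β μ s a : ℝ) (hβ : 0 < β) (hμ : 0 < μ)
    (hs : 0 < s) (hsa : s < a) :
    ∫⁻ r in Ioo s a,
        ENNReal.ofReal
          ((a ^ 2 - r ^ 2) ^ (β - 1) * (r ^ 2 - s ^ 2) ^ (μ - 1) * r ^ (1 - 2 * β - 2 * μ))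
      = ENNReal.ofReal
          (1 / 2 * eulerBeta β μ * a ^ (-2 * μ) * s ^ (-2 * β) *
            (a ^ 2 - s ^ 2) ^ (β + μ - 1)) := by
  have ha : 0 < a := hs.trans hsa
  have hE : 0 < a ^ 2 - s ^ 2 := by nlinarith
  set E : ℝ := a ^ 2 - s ^ 2 with hEdef
  set φ : ℝ → ℝ := fun r => a ^ 2 / E - a ^ 2 * s ^ 2 / E * (r ^ 2)⁻¹ with hφdef
  set ψ : ℝ → ℝ := fun r => 2 * a ^ 2 * s ^ 2 / (E * r ^ 3) with hψdef
  set C : ℝ := 1 / 2 * a ^ (-2 * μ) * s ^ (-2 * β) * E ^ (β + μ - 1) with hCdef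
  set g : ℝ → ℝ≥0∞ := fun u => ENNReal.ofReal (C * (u ^ (μ - 1) * (1 - u) ^ (β - 1)))
    with hgdef
  -- basic facts for r ∈ Ioo s a
  have hval : ∀ r ∈ Ioo s a, φ r = a ^ 2 * (r ^ 2 - s ^ 2) / (r ^ 2 * E) := by
    intro r hr
    have hr0 : (0:ℝ) < r := hs.trans hr.1
    simp only [hφdef]
    field_simp
  have hval2 : ∀ r ∈ Ioo s a, 1 - φ r = s ^ 2 * (a ^ 2 - r ^ 2) / (r ^ 2 * E) := by
    intro r hr
    have hr0 : (0:ℝ) < r := hs.trans hr.1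
    simp only [hφdef, hEdef]
    have hE' : a ^ 2 - s ^ 2 ≠ 0 := hE.ne'
    field_simp
    ring
  -- derivative
  have hder : ∀ r ∈ Ioo s a, HasDerivWithinAt φ (ψ r) (Ioo s a) r := by
    intro r hr
    have hr0 : (0:ℝ) < r := hs.trans hr.1
    have h1 : HasDerivAt (fun x : ℝ => x ^ 2) (2 * r ^ 1) r := by
      simpa using hasDerivAt_pow 2 r
    have h2 : HasDerivAt (fun x : ℝ => (x ^ 2)⁻¹) (-(2 * r ^ 1) / (r ^ 2) ^ 2) r :=
      h1.inv (by positivity)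
    have h3 : HasDerivAt φ (ψ r) r := by
      have := (h2.const_mul (a ^ 2 * s ^ 2 / E)).const_sub (a ^ 2 / E)
      refine this.congr_deriv ?_
      simp only [hψdef]
      field_simp
    exact h3.hasDerivWithinAt
  -- injectivity
  have hmono : StrictMonoOn φ (Ioo s a) := by
    intro x hx y hy hxy
    have hx0 : (0:ℝ) < x := hs.trans hx.1
    have hy0 : (0:ℝ) < y := hs.trans hy.1
    have hinv : (y ^ 2)⁻¹ < (x ^ 2)⁻¹ := by
      apply inv_strictAnti₀ (by positivity)
      nlinarith
    have hc : (0:ℝ) < a ^ 2 * s ^ 2 / E := by positivity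
    simp only [hφdef]
    have := mul_lt_mul_of_pos_left hinv hc
    linarith
  have hinj : InjOn φ (Ioo s a) := hmono.injOn
  -- image
  have himg : φ '' Ioo s a = Ioo 0 1 := by
    apply Subset.antisymm
    · rintro u ⟨r, hr, rfl⟩
      have hr0 : (0:ℝ) < r := hs.trans hr.1
      have h1 : 0 < φ r := by
        rw [hval r hr]
        have : 0 < r ^ 2 - s ^ 2 := by nlinarith [hr.1]
        positivity
      have h2 : 0 < 1 - φ r := by
        rw [hval2 r hr]
        have : 0 < a ^ 2 - r ^ 2 := by nlinarith [hr.2]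
        positivity
      exact ⟨h1, by linarith⟩
    · rintro u ⟨hu0, hu1⟩
      set D : ℝ := a ^ 2 - u * E with hDdef
      have hD1 : s ^ 2 < D := by simp only [hDdef, hEdef]; nlinarith
      have hD2 : D < a ^ 2 := by simp only [hDdef]; nlinarith
      have hDpos : 0 < D := lt_trans (by positivity) hD1
      refine ⟨s * a / Real.sqrt D, ⟨?_, ?_⟩, ?_⟩
      · apply lt_of_pow_lt_pow_left₀ 2 (by positivity)
        rw [div_pow, mul_pow, Real.sq_sqrt hDpos.le]
        rw [lt_div_iff₀ hDpos]
        nlinarith [mul_lt_mul_of_pos_left hD2 (by positivity : (0:ℝ) < s ^ 2)]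
      · apply lt_of_pow_lt_pow_left₀ 2 ha.le
        rw [div_pow, mul_pow, Real.sq_sqrt hDpos.le]
        rw [div_lt_iff₀ hDpos]
        nlinarith
      · have hsq : (s * a / Real.sqrt D) ^ 2 = s ^ 2 * a ^ 2 / D := by
          rw [div_pow, mul_pow, Real.sq_sqrt hDpos.le]
        simp only [hφdef, hsq]
        rw [hDdef]
        field_simp
        ring
  have hCpos : 0 < C := by simp only [hCdef]; positivity
  -- pointwise identity
  have hpoint : ∀ r ∈ Ioo s a,
      ENNReal.ofReal |ψ r| * g (φ r)
        = ENNReal.ofReal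
            ((a ^ 2 - r ^ 2) ^ (β - 1) * (r ^ 2 - s ^ 2) ^ (μ - 1)
              * r ^ (1 - 2 * β - 2 * μ)) := by
    intro r hr
    have hr0 : (0:ℝ) < r := hs.trans hr.1
    have hrs : 0 < r ^ 2 - s ^ 2 := by nlinarith [hr.1]
    have har : 0 < a ^ 2 - r ^ 2 := by nlinarith [hr.2]
    have hψpos : 0 < ψ r := by simp only [hψdef]; positivity
    have hu : φ r = a ^ 2 * (r ^ 2 - s ^ 2) / (r ^ 2 * E) := hval r hr
    have hu' : 1 - φ r = s ^ 2 * (a ^ 2 - r ^ 2) / (r ^ 2 * E) := hval2 r hr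
    have hupos : 0 < φ r := by rw [hu]; positivity
    have hu'pos : 0 < 1 - φ r := by rw [hu']; positivity
    rw [abs_of_pos hψpos, hgdef]
    rw [← ENNReal.ofReal_mul hψpos.le]
    congr 1
    have hL : 0 < ψ r * (C * ((φ r) ^ (μ - 1) * (1 - φ r) ^ (β - 1))) := by positivity
    have hR : 0 < (a ^ 2 - r ^ 2) ^ (β - 1) * (r ^ 2 - s ^ 2) ^ (μ - 1)
        * r ^ (1 - 2 * β - 2 * μ) := by positivity
    refine Real.log_injOn_pos (Set.mem_Ioi.mpr hL) (Set.mem_Ioi.mpr hR) ?_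
    have hup : (0:ℝ) < φ r ^ (μ - 1) := Real.rpow_pos_of_pos hupos _
    have hu'p : (0:ℝ) < (1 - φ r) ^ (β - 1) := Real.rpow_pos_of_pos hu'pos _
    have hlog1 : Real.log (φ r)
        = 2 * Real.log a + Real.log (r ^ 2 - s ^ 2) - 2 * Real.log r - Real.log E := by
      rw [hu, Real.log_div (by positivity) (by positivity),
        Real.log_mul (by positivity) hrs.ne', Real.log_mul (by positivity) hE.ne',
        Real.log_pow, Real.log_pow]
      push_cast; ring
    have hlog2 : Real.log (1 - φ r)
        = 2 * Real.log s + Real.log (a ^ 2 - r ^ 2) - 2 * Real.log r - Real.log E := by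
      rw [hu', Real.log_div (by positivity) (by positivity),
        Real.log_mul (by positivity) har.ne', Real.log_mul (by positivity) hE.ne',
        Real.log_pow, Real.log_pow]
      push_cast; ring
    have hlogψ : Real.log (ψ r)
        = Real.log 2 + 2 * Real.log a + 2 * Real.log s - Real.log E - 3 * Real.log r := by
      simp only [hψdef]
      rw [Real.log_div (by positivity) (by positivity),
        Real.log_mul (by positivity) (by positivity),
        Real.log_mul (by positivity) (by positivity),
        Real.log_mul hE.ne' (by positivity), Real.log_pow, Real.log_pow, Real.log_pow]
      push_cast; ring
    have hlogC : Real.log C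
        = -Real.log 2 + (-2 * μ) * Real.log a + (-2 * β) * Real.log s
          + (β + μ - 1) * Real.log E := by
      simp only [hCdef]
      rw [Real.log_mul (by positivity) (by positivity),
        Real.log_mul (by positivity) (by positivity),
        Real.log_mul (by positivity) (by positivity),
        Real.log_rpow ha, Real.log_rpow hs, Real.log_rpow hE, one_div, Real.log_inv]
    have h1 : (0:ℝ) < (a ^ 2 - r ^ 2) ^ (β - 1) := Real.rpow_pos_of_pos har _
    have h2 : (0:ℝ) < (r ^ 2 - s ^ 2) ^ (μ - 1) := Real.rpow_pos_of_pos hrs _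
    have h3 : (0:ℝ) < r ^ (1 - 2 * β - 2 * μ) := Real.rpow_pos_of_pos hr0 _
    rw [Real.log_mul hψpos.ne' (mul_pos hCpos (mul_pos hup hu'p)).ne',
      Real.log_mul hCpos.ne' (mul_pos hup hu'p).ne',
      Real.log_mul hup.ne' hu'p.ne',
      Real.log_rpow hupos, Real.log_rpow hu'pos,
      Real.log_mul (mul_pos h1 h2).ne' h3.ne',
      Real.log_mul h1.ne' h2.ne',
      Real.log_rpow har, Real.log_rpow hrs, Real.log_rpow hr0,
      hlogψ, hlogC, hlog1, hlog2]
    ring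
  have key := lintegral_image_eq_lintegral_abs_det_fderiv_mul volume measurableSet_Ioo
      (f' := fun r => (1 : ℝ →L[ℝ] ℝ).smulRight (ψ r))
      (fun r hr => (hder r hr).hasFDerivWithinAt) hinj g
  rw [himg] at key
  calc ∫⁻ r in Ioo s a, ENNReal.ofReal
          ((a ^ 2 - r ^ 2) ^ (β - 1) * (r ^ 2 - s ^ 2) ^ (μ - 1) * r ^ (1 - 2 * β - 2 * μ))
      = ∫⁻ r in Ioo s a,
          ENNReal.ofReal |((1 : ℝ →L[ℝ] ℝ).smulRight (ψ r)).det| * g (φ r) := by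
        refine setLIntegral_congr_fun measurableSet_Ioo (fun r hr => ?_)
        rw [ContinuousLinearMap.smulRight_one_eq_toSpanSingleton, ContinuousLinearMap.det_toSpanSingleton, hpoint r hr]
    _ = ∫⁻ u in Ioo (0:ℝ) 1, g u := key.symm
    _ = ∫⁻ u in Ioo (0:ℝ) 1,
          ENNReal.ofReal C * ENNReal.ofReal (u ^ (μ - 1) * (1 - u) ^ (β - 1)) := by
        refine setLIntegral_congr_fun measurableSet_Ioo (fun u hu => ?_)
        rw [hgdef]
        exact ENNReal.ofReal_mul hCpos.le
    _ = ENNReal.ofReal C * ENNReal.ofReal (eulerBeta β μ) := by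
        rw [lintegral_const_mul' _ _ ENNReal.ofReal_ne_top, realBeta_lintegral hβ hμ]
    _ = ENNReal.ofReal
          (1 / 2 * eulerBeta β μ * a ^ (-2 * μ) * s ^ (-2 * β) * E ^ (β + μ - 1)) := by
        rw [← ENNReal.ofReal_mul hCpos.le]
        congr 1
        rw [hCdef]
        ring
end

section
/- Let μ > 0, let c be a real number, let g : (0,∞) → [0,∞] be measurable, and let 0 < s < 1. Put w = √(1−s²)/s. Then ∫_w^∞ g(r) (r² − w²)^{μ−1} (1 + r²)^{−(c+1)/2} r dr = s^{2−2μ} ∫_0^s g(√(1−t²)/t) (s² − t²)^{μ−1} t^{c−2μ} dt, as an equality of extended nonnegative reals. -/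
open MeasureTheory Set ContinuousLinearMap
open scoped ENNReal

theorem lintegral_image_eq_lintegral_abs_deriv_mul' {s : Set ℝ} {f : ℝ → ℝ} {f' : ℝ → ℝ}
    (hs : MeasurableSet s) (hf' : ∀ x ∈ s, HasDerivWithinAt f (f' x) s x)
    (hf : InjOn f s) (g : ℝ → ℝ≥0∞) :
    ∫⁻ x in f '' s, g x = ∫⁻ x in s, ENNReal.ofReal |f' x| * g (f x) := by
  simpa only [ContinuousLinearMap.det_toSpanSingleton] using
    lintegral_image_eq_lintegral_abs_det_fderiv_mul volume hs
      (fun x hx => (hf' x hx).hasFDerivWithinAt) hf g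

/-- Change of variables `1 + r² = 1/t²` in the Funk–Radon transform of a zonal function:
for `μ > 0`, `c ∈ ℝ`, measurable `g : (0,∞) → [0,∞]`, `0 < s < 1` and `w = √(1−s²)/s`,
`∫_w^∞ g(r) (r²−w²)^{μ−1} (1+r²)^{−(c+1)/2} r dr
  = s^{2−2μ} ∫_0^s g(√(1−t²)/t) (s²−t²)^{μ−1} t^{c−2μ} dt`. -/
theorem funk_radon_zonal_change_of_variables
    (μ c : ℝ) (hμ : 0 < μ) (g : ℝ → ℝ≥0∞) (hg : Measurable g)
    (s : ℝ) (hs0 : 0 < s) (hs1 : s < 1) (w : ℝ) (hw : w = Real.sqrt (1 - s ^ 2) / s) :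
    ∫⁻ r in Ioi w,
        g r * ENNReal.ofReal ((r ^ 2 - w ^ 2) ^ (μ - 1) * (1 + r ^ 2) ^ (-(c + 1) / 2) * r)
      = ENNReal.ofReal (s ^ (2 - 2 * μ)) *
        ∫⁻ t in Ioo 0 s,
          g (Real.sqrt (1 - t ^ 2) / t) *
            ENNReal.ofReal ((s ^ 2 - t ^ 2) ^ (μ - 1) * t ^ (c - 2 * μ)) := by
  have hs2 : 0 < 1 - s ^ 2 := by nlinarith
  have hw0 : 0 ≤ w := by rw [hw]; positivity
  have hw2 : w ^ 2 = (1 - s ^ 2) / s ^ 2 := by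
    rw [hw, div_pow, Real.sq_sqrt hs2.le]
  set φ : ℝ → ℝ := fun t => Real.sqrt (1 - t ^ 2) / t with hφ
  set φ' : ℝ → ℝ := fun t => -(1 / (t ^ 2 * Real.sqrt (1 - t ^ 2))) with hφ'
  have key : ∀ t ∈ Ioo (0:ℝ) s, (φ t) ^ 2 = (1 - t ^ 2) / t ^ 2 := by
    intro t ht
    have ht2 : 0 < 1 - t ^ 2 := by nlinarith [ht.1, ht.2]
    rw [hφ]; simp only
    rw [div_pow, Real.sq_sqrt ht2.le]
  have himage : φ '' Ioo 0 s = Ioi w := by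
    apply Subset.antisymm
    · rintro r ⟨t, ht, rfl⟩
      have ht0 := ht.1
      have hts := ht.2
      have ht2 : 0 < 1 - t ^ 2 := by nlinarith
      have hφpos : 0 < φ t := by rw [hφ]; positivity
      have h2 : w ^ 2 < (φ t) ^ 2 := by
        rw [hw2, key t ht]
        rw [div_lt_div_iff₀ (by positivity) (by positivity)]
        nlinarith
      exact lt_of_pow_lt_pow_left₀ 2 hφpos.le h2
    · intro r hr
      have hr0 : 0 < r := lt_of_le_of_lt hw0 hr
      have h1r : (0:ℝ) < 1 + r ^ 2 := by positivity
      have hsr : Real.sqrt (1 + r ^ 2) ^ 2 = 1 + r ^ 2 := Real.sq_sqrt h1r.le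
      have hspos : 0 < Real.sqrt (1 + r ^ 2) := Real.sqrt_pos.mpr h1r
      refine ⟨(Real.sqrt (1 + r ^ 2))⁻¹, ⟨by positivity, ?_⟩, ?_⟩
      · have hr2 : w ^ 2 < r ^ 2 := by
          nlinarith [lt_of_le_of_lt hw0 hr, hr.out]
        have h2 : 1 / s ^ 2 < 1 + r ^ 2 := by
          rw [hw2] at hr2
          rw [div_lt_iff₀ (by positivity)] at hr2 ⊢
          nlinarith
        have h3 : Real.sqrt (1 / s ^ 2) < Real.sqrt (1 + r ^ 2) :=
          Real.sqrt_lt_sqrt (by positivity) h2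
        rw [one_div, Real.sqrt_inv, Real.sqrt_sq hs0.le] at h3
        have := (inv_lt_inv₀ (by positivity) (by positivity)).mpr h3
        rwa [inv_inv] at this
      · rw [hφ]; simp only
        have e1 : 1 - ((Real.sqrt (1 + r ^ 2))⁻¹) ^ 2 = r ^ 2 / (1 + r ^ 2) := by
          rw [inv_pow, hsr]; field_simp; ring
        rw [e1, Real.sqrt_div (sq_nonneg r), Real.sqrt_sq hr0.le]
        rw [div_inv_eq_mul, div_mul_cancel₀ _ (ne_of_gt hspos)]
  have hinj : InjOn φ (Ioo 0 s) := by
    intro t1 h1 t2 h2 heq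
    have e1 := key t1 h1
    have e2 := key t2 h2
    rw [heq, e2] at e1
    have h10 := h1.1; have h20 := h2.1
    have : t1 ^ 2 = t2 ^ 2 := by
      field_simp at e1
      nlinarith
    nlinarith
  have hderiv : ∀ t ∈ Ioo (0:ℝ) s, HasDerivWithinAt φ (φ' t) (Ioo 0 s) t := by
    intro t ht
    have ht0 := ht.1
    have ht2 : 0 < 1 - t ^ 2 := by nlinarith [ht.2]
    have hu : Real.sqrt (1 - t ^ 2) ^ 2 = 1 - t ^ 2 := Real.sq_sqrt ht2.le
    have hu0 : 0 < Real.sqrt (1 - t ^ 2) := Real.sqrt_pos.mpr ht2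
    have h1 : HasDerivAt (fun x : ℝ => 1 - x ^ 2) (-(2 * t)) t := by
      simpa using ((hasDerivAt_pow 2 t).const_sub 1)
    have h2 : HasDerivAt (fun x : ℝ => Real.sqrt (1 - x ^ 2))
        (-(2 * t) / (2 * Real.sqrt (1 - t ^ 2))) t := h1.sqrt (by positivity)
    have h3 : HasDerivAt φ
        ((-(2 * t) / (2 * Real.sqrt (1 - t ^ 2)) * t - Real.sqrt (1 - t ^ 2) * 1) / t ^ 2) t :=
      h2.div (hasDerivAt_id t) (ne_of_gt ht0)
    have : (-(2 * t) / (2 * Real.sqrt (1 - t ^ 2)) * t - Real.sqrt (1 - t ^ 2) * 1) / t ^ 2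
        = φ' t := by
      rw [hφ']
      field_simp
      linear_combination -hu
    rw [this] at h3
    exact h3.hasDerivWithinAt
  rw [← himage, lintegral_image_eq_lintegral_abs_deriv_mul' measurableSet_Ioo hderiv hinj,
    ← lintegral_const_mul' _ _ ENNReal.ofReal_ne_top]
  apply setLIntegral_congr_fun measurableSet_Ioo
  intro t ht
  have ht0 := ht.1
  have hts := ht.2
  have ht2 : 0 < 1 - t ^ 2 := by nlinarith
  have hu0 : 0 < Real.sqrt (1 - t ^ 2) := Real.sqrt_pos.mpr ht2
  have hu : Real.sqrt (1 - t ^ 2) ^ 2 = 1 - t ^ 2 := Real.sq_sqrt ht2.le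
  have hst : 0 < s ^ 2 - t ^ 2 := by nlinarith
  have hφpos : 0 < φ t := by rw [hφ]; positivity
  have hsq := key t ht
  have hreal : |φ' t| * ((φ t ^ 2 - w ^ 2) ^ (μ - 1) * (1 + φ t ^ 2) ^ (-(c + 1) / 2) * φ t)
      = s ^ (2 - 2 * μ) * ((s ^ 2 - t ^ 2) ^ (μ - 1) * t ^ (c - 2 * μ)) := by
    have habs : |φ' t| = 1 / (t ^ 2 * Real.sqrt (1 - t ^ 2)) := by
      rw [hφ']; simp only
      rw [abs_neg, abs_of_pos (by positivity)]
    have e1 : φ t ^ 2 - w ^ 2 = (s ^ 2 - t ^ 2) / (s ^ 2 * t ^ 2) := by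
      rw [hsq, hw2]; field_simp; ring
    have e2 : 1 + φ t ^ 2 = (t ^ 2 : ℝ)⁻¹ := by
      rw [hsq]; field_simp; ring
    have es : ((s ^ 2 : ℝ)) ^ (μ - 1) = s ^ (2 * (μ - 1)) := by
      rw [← Real.rpow_natCast s 2, ← Real.rpow_mul hs0.le]; norm_num
    have et : ((t ^ 2 : ℝ)) ^ (μ - 1) = t ^ (2 * (μ - 1)) := by
      rw [← Real.rpow_natCast t 2, ← Real.rpow_mul ht0.le]; norm_num
    have ec : ((t ^ 2 : ℝ)⁻¹) ^ (-(c + 1) / 2) = t ^ (c + 1) := by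
      rw [← Real.rpow_natCast t 2, ← Real.rpow_neg ht0.le, ← Real.rpow_mul ht0.le]
      norm_num
      congr 1
      ring
    have hsp : (0:ℝ) < s ^ (2 * (μ - 1)) := Real.rpow_pos_of_pos hs0 _
    have htp : (0:ℝ) < t ^ (2 * (μ - 1)) := Real.rpow_pos_of_pos ht0 _
    have hs' : s ^ (2 - 2 * μ) = (s ^ (2 * (μ - 1)))⁻¹ := by
      rw [← Real.rpow_neg hs0.le]; ring_nf
    have ht' : t ^ (c - 2 * μ) = t ^ (c + 1) * (t ^ (2 * (μ - 1)))⁻¹ / t ^ 3 := by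
      have h : t ^ (c - 2 * μ) = t ^ (c + 1 + -(2 * (μ - 1)) - 3) := by ring_nf
      rw [h, Real.rpow_sub ht0, Real.rpow_add ht0, Real.rpow_neg ht0.le,
        show ((3:ℝ)) = ((3:ℕ):ℝ) by norm_num, Real.rpow_natCast]
    rw [habs, e1, e2, ec, Real.div_rpow hst.le (by positivity),
      Real.mul_rpow (sq_nonneg s) (sq_nonneg t), es, et, hs', ht']
    simp only [hφ]
    field_simp

  beta_reduce
  rw [← mul_assoc, mul_comm (ENNReal.ofReal |φ' t|) (g (φ t)), mul_assoc,
    ← ENNReal.ofReal_mul (abs_nonneg _), hreal, ENNReal.ofReal_mul (by positivity)]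
  have hgφ : g (φ t) = g (Real.sqrt (1 - t ^ 2) / t) := rfl
  rw [hgφ]
  ring
end

section
/- Let α > 0, a > 0, and let f : [a,∞) → [0,∞) be measurable, locally integrable on [a,∞), and suppose ∫_a^∞ f(r) r^{2α−1} dr = ∞. Then for every t ≥ a one has ∫_t^∞ (r² − t²)^{α−1} f(r) r dr = ∞, i.e. the Erdélyi–Kober integral (I^α_{−,2} f)(t) diverges for every t ≥ a. -/
open MeasureTheory Set
open scoped ENNReal

/-- Second half of part (ii) of Lemma A.1: if `α > 0`, `a > 0`, `f : [a,∞) → [0,∞)` is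
measurable, locally integrable on `[a,∞)`, and `∫_a^∞ f(r) r^{2α−1} dr = ∞`, then for every
`t ≥ a` the Erdélyi–Kober integral `∫_t^∞ (r²−t²)^{α−1} f(r) r dr` diverges. -/
theorem erdelyi_kober_minus_divergent
    (α a : ℝ) (hα : 0 < α) (ha : 0 < a) (f : ℝ → ℝ) (hf : Measurable f)
    (hnonneg : ∀ r ∈ Ici a, 0 ≤ f r)
    (hloc : LocallyIntegrableOn f (Ici a) volume)
    (hdiv : ∫⁻ r in Ioi a, ENNReal.ofReal (f r * r ^ (2 * α - 1)) = ⊤) :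
    ∀ t, a ≤ t →
      ∫⁻ r in Ioi t, ENNReal.ofReal ((r ^ 2 - t ^ 2) ^ (α - 1) * f r * r) = ⊤ := by
  intro t ht
  have ht0 : 0 < t := lt_of_lt_of_le ha ht
  set b := 2 * t with hb
  have htb : t < b := by simp only [hb]; linarith
  have hab : a ≤ b := by linarith
  have hb0 : 0 < b := by linarith
  -- Step 1: the integral over `Ioc a b` is finite
  have hInt : IntegrableOn f (Icc a b) volume :=
    hloc.integrableOn_compact_subset Icc_subset_Ici_self isCompact_Icc
  have hInt' : IntegrableOn f (Ioc a b) volume := hInt.mono_set Ioc_subset_Icc_self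
  have hfin0 : ∫⁻ r in Ioc a b, ENNReal.ofReal (f r) < ⊤ := by
    have hae : 0 ≤ᵐ[volume.restrict (Ioc a b)] f := by
      refine (ae_restrict_iff' measurableSet_Ioc).2 (ae_of_all _ fun r hr => ?_)
      exact hnonneg r (le_of_lt hr.1)
    exact (hasFiniteIntegral_iff_ofReal hae).1 hInt'.2
  set C : ℝ := max (a ^ (2 * α - 1)) (b ^ (2 * α - 1)) with hC
  have hfin : ∫⁻ r in Ioc a b, ENNReal.ofReal (f r * r ^ (2 * α - 1)) < ⊤ := by
    have hbound : ∀ r ∈ Ioc a b,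
        ENNReal.ofReal (f r * r ^ (2 * α - 1)) ≤
          ENNReal.ofReal C * ENNReal.ofReal (f r) := by
      intro r hr
      have hr0 : 0 < r := lt_trans ha hr.1
      have hfr : 0 ≤ f r := hnonneg r (le_of_lt hr.1)
      have hrC : r ^ (2 * α - 1) ≤ C := by
        rcases le_or_gt 0 (2 * α - 1) with hz | hz
        · exact le_max_of_le_right (Real.rpow_le_rpow (le_of_lt hr0) hr.2 hz)
        · exact le_max_of_le_left
            (Real.rpow_le_rpow_of_nonpos ha (le_of_lt hr.1) (le_of_lt hz))
      rw [← ENNReal.ofReal_mul (le_trans (Real.rpow_nonneg (le_of_lt hr0) _) hrC)]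
      exact ENNReal.ofReal_le_ofReal (by
        rw [mul_comm (f r)]
        exact mul_le_mul_of_nonneg_right hrC hfr)
    calc ∫⁻ r in Ioc a b, ENNReal.ofReal (f r * r ^ (2 * α - 1))
        ≤ ∫⁻ r in Ioc a b, ENNReal.ofReal C * ENNReal.ofReal (f r) :=
          setLIntegral_mono (by fun_prop) hbound
      _ = ENNReal.ofReal C * ∫⁻ r in Ioc a b, ENNReal.ofReal (f r) :=
          lintegral_const_mul _ (by fun_prop)
      _ < ⊤ := ENNReal.mul_lt_top ENNReal.ofReal_lt_top hfin0
  -- Step 2: the tail integral over `Ioi b` is infinite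
  have htail : ∫⁻ r in Ioi b, ENNReal.ofReal (f r * r ^ (2 * α - 1)) = ⊤ := by
    have hsplit : (Ioi a : Set ℝ) = Ioc a b ∪ Ioi b := (Ioc_union_Ioi_eq_Ioi hab).symm
    rw [hsplit, lintegral_union measurableSet_Ioi (Ioc_disjoint_Ioi le_rfl)] at hdiv
    by_contra h
    exact absurd hdiv (by simp [ENNReal.add_eq_top, h, hfin.ne])
  -- Step 3: pointwise comparison on `Ioi b`
  set c : ℝ := min ((3 / 4 : ℝ) ^ (α - 1)) 1 with hc
  have hc0 : 0 < c := lt_min (Real.rpow_pos_of_pos (by norm_num) _) one_pos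
  have hpoint : ∀ r ∈ Ioi b,
      ENNReal.ofReal c * ENNReal.ofReal (f r * r ^ (2 * α - 1)) ≤
        ENNReal.ofReal ((r ^ 2 - t ^ 2) ^ (α - 1) * f r * r) := by
    intro r hr
    have hr0 : 0 < r := lt_trans hb0 hr
    have hfr : 0 ≤ f r := hnonneg r (le_of_lt (lt_of_le_of_lt hab hr))
    have hsq : (3 / 4 : ℝ) * r ^ 2 ≤ r ^ 2 - t ^ 2 := by
      have h2 : 2 * t < r := hr
      nlinarith
    have hsq' : r ^ 2 - t ^ 2 ≤ r ^ 2 := by nlinarith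
    have hsqpos : 0 < r ^ 2 - t ^ 2 := by nlinarith
    have hr2pos : (0:ℝ) < r ^ 2 := by positivity
    -- key inequality: `c * (r^2)^(α-1) ≤ (r^2 - t^2)^(α-1)`
    have hkey : c * (r ^ 2 : ℝ) ^ (α - 1) ≤ (r ^ 2 - t ^ 2) ^ (α - 1) := by
      rcases le_or_gt 0 (α - 1) with hz | hz
      · calc c * (r ^ 2 : ℝ) ^ (α - 1)
            ≤ (3 / 4 : ℝ) ^ (α - 1) * (r ^ 2 : ℝ) ^ (α - 1) :=
              mul_le_mul_of_nonneg_right (min_le_left _ _)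
                (Real.rpow_nonneg (le_of_lt hr2pos) _)
          _ = ((3 / 4 : ℝ) * r ^ 2) ^ (α - 1) :=
              (Real.mul_rpow (by norm_num) (le_of_lt hr2pos)).symm
          _ ≤ (r ^ 2 - t ^ 2) ^ (α - 1) :=
              Real.rpow_le_rpow (by positivity) hsq hz
      · calc c * (r ^ 2 : ℝ) ^ (α - 1)
            ≤ 1 * (r ^ 2 : ℝ) ^ (α - 1) :=
              mul_le_mul_of_nonneg_right (min_le_right _ _)
                (Real.rpow_nonneg (le_of_lt hr2pos) _)
          _ = (r ^ 2 : ℝ) ^ (α - 1) := one_mul _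
          _ ≤ (r ^ 2 - t ^ 2) ^ (α - 1) :=
              Real.rpow_le_rpow_of_nonpos hsqpos hsq' (le_of_lt hz)
    -- rewrite `(r^2)^(α-1) * r = r^(2α - 1)`
    have hpow : (r ^ 2 : ℝ) ^ (α - 1) * r = r ^ (2 * α - 1) := by
      have h1 : (r ^ 2 : ℝ) ^ (α - 1) = r ^ (2 * (α - 1)) := by
        rw [show (r ^ 2 : ℝ) = r ^ (2 : ℝ) by
          rw [← Real.rpow_natCast r 2]; norm_num,
          ← Real.rpow_mul (le_of_lt hr0)]
      rw [h1, show (2 * α - 1) = 2 * (α - 1) + 1 by ring,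
        Real.rpow_add_one (ne_of_gt hr0)]
    rw [← ENNReal.ofReal_mul (le_of_lt hc0)]
    apply ENNReal.ofReal_le_ofReal
    calc c * (f r * r ^ (2 * α - 1))
        = (c * (r ^ 2 : ℝ) ^ (α - 1)) * f r * r := by rw [← hpow]; ring
      _ ≤ (r ^ 2 - t ^ 2) ^ (α - 1) * f r * r := by
          apply mul_le_mul_of_nonneg_right _ (le_of_lt hr0)
          exact mul_le_mul_of_nonneg_right hkey hfr
  -- Step 4: conclude
  rw [eq_top_iff]
  calc (⊤ : ℝ≥0∞) = ENNReal.ofReal c * ∫⁻ r in Ioi b, ENNReal.ofReal (f r * r ^ (2 * α - 1)) := by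
        rw [htail, ENNReal.mul_top ((ENNReal.ofReal_pos.2 hc0).ne')]
    _ = ∫⁻ r in Ioi b, ENNReal.ofReal c * ENNReal.ofReal (f r * r ^ (2 * α - 1)) :=
        (lintegral_const_mul _ (by fun_prop)).symm
    _ ≤ ∫⁻ r in Ioi b, ENNReal.ofReal ((r ^ 2 - t ^ 2) ^ (α - 1) * f r * r) :=
        setLIntegral_mono (by fun_prop) hpoint
    _ ≤ ∫⁻ r in Ioi t, ENNReal.ofReal ((r ^ 2 - t ^ 2) ^ (α - 1) * f r * r) :=
        lintegral_mono_set (Ioi_subset_Ioi (le_of_lt htb))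
end
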